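/- arXiv:1908.00331 — 5 statements merged into one kernel-verified Lean document; each statement's English description precedes it below -/
import Mathlib

section
/- A map σ : G → G is an endomorphism of G = ES_1(p,n) if and only if there exist matrices A,B,C,D ∈ M_n(𝔽_p) with M = [[A,C],[D,B]] ∈ M_{2n}(𝔽_p) satisfying MᵗΔM = lΔ for some l ∈ 𝔽_p, together with linear functionals α, β : 𝔽_p^n → 𝔽_p, such that for all (u,w,z) ∈ G: σ(u,w,z) = (Au+Cw, Du+Bw, α(u)+β(w)+lz+(1/2)uᵗ(AᵗD)u+(1/2)wᵗ(CᵗB)w+wᵗ(CᵗD)u). -/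
open Matrix

/-- The Heisenberg group `ES₁(p,n)`: carrier `𝔽_p^n × 𝔽_p^n × 𝔽_p`. -/
@[ext]
structure ES1 (p n : ℕ) : Type where
  u : Fin n → ZMod p
  w : Fin n → ZMod p
  z : ZMod p

namespace ES1

variable {p n : ℕ}

instance : Mul (ES1 p n) :=
  ⟨fun x y => ⟨x.u + y.u, x.w + y.w, x.z + y.z + x.u ⬝ᵥ y.w⟩⟩

@[simp] theorem mul_u (x y : ES1 p n) : (x * y).u = x.u + y.u := rfl
@[simp] theorem mul_w (x y : ES1 p n) : (x * y).w = x.w + y.w := rfl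
@[simp] theorem mul_z (x y : ES1 p n) : (x * y).z = x.z + y.z + x.u ⬝ᵥ y.w := rfl

instance : One (ES1 p n) := ⟨⟨0, 0, 0⟩⟩

@[simp] theorem one_u : (1 : ES1 p n).u = 0 := rfl
@[simp] theorem one_w : (1 : ES1 p n).w = 0 := rfl
@[simp] theorem one_z : (1 : ES1 p n).z = 0 := rfl

instance : Inv (ES1 p n) :=
  ⟨fun x => ⟨-x.u, -x.w, -x.z + x.u ⬝ᵥ x.w⟩⟩

@[simp] theorem inv_u (x : ES1 p n) : (x⁻¹).u = -x.u := rfl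
@[simp] theorem inv_w (x : ES1 p n) : (x⁻¹).w = -x.w := rfl
@[simp] theorem inv_z (x : ES1 p n) : (x⁻¹).z = -x.z + x.u ⬝ᵥ x.w := rfl

instance : Group (ES1 p n) :=
  Group.ofLeftAxioms
    (fun a b c => by
      ext <;> simp [add_dotProduct, dotProduct_add] <;> ring)
    (fun a => by ext <;> simp)
    (fun a => by ext <;> simp [neg_dotProduct] <;> ring)

end ES1

/-- The standard symplectic matrix `Δ = [[0, Iₙ], [-Iₙ, 0]]`. -/
def Delta (p n : ℕ) : Matrix (Fin n ⊕ Fin n) (Fin n ⊕ Fin n) (ZMod p) :=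
  Matrix.fromBlocks 0 1 (-1) 0


section Helpers
variable {p n : ℕ} [Fact p.Prime]

lemma dph (M N : Matrix (Fin n) (Fin n) (ZMod p)) (u v : Fin n → ZMod p) :
    (M *ᵥ u) ⬝ᵥ (N *ᵥ v) = u ⬝ᵥ ((Mᵀ * N) *ᵥ v) := by
  rw [Matrix.dotProduct_mulVec, Matrix.dotProduct_mulVec, ← Matrix.vecMul_vecMul,
    Matrix.vecMul_transpose]

lemma dpt (S : Matrix (Fin n) (Fin n) (ZMod p)) (u v : Fin n → ZMod p) :
    u ⬝ᵥ (Sᵀ *ᵥ v) = v ⬝ᵥ (S *ᵥ u) := by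
  rw [Matrix.dotProduct_mulVec, Matrix.vecMul_transpose, dotProduct_comm]

lemma ext_of_dp {M N : Matrix (Fin n) (Fin n) (ZMod p)}
    (h : ∀ u v, u ⬝ᵥ (M *ᵥ v) = u ⬝ᵥ (N *ᵥ v)) : M = N := by
  ext i j
  have := h (Pi.single i 1) (Pi.single j 1)
  simpa [Matrix.mulVec_single, single_dotProduct] using this

lemma additive_to_matrix (F : (Fin n → ZMod p) → (Fin n → ZMod p))
    (hF : ∀ a b, F (a + b) = F a + F b) :
    ∃ M : Matrix (Fin n) (Fin n) (ZMod p), ∀ v, F v = M *ᵥ v := by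
  have h0 : F 0 = 0 := by
    have := hF 0 0; simp only [add_zero] at this
    exact (left_eq_add.mp this)
  set f : (Fin n → ZMod p) →+ (Fin n → ZMod p) := ⟨⟨F, h0⟩, hF⟩
  refine ⟨LinearMap.toMatrix' (f.toZModLinearMap p), fun v => ?_⟩
  rw [← Matrix.toLin'_apply, Matrix.toLin'_toMatrix']; rfl

lemma additive_to_linear (F : (Fin n → ZMod p) → ZMod p)
    (hF : ∀ a b, F (a + b) = F a + F b) :
    ∃ φ : (Fin n → ZMod p) →ₗ[ZMod p] ZMod p, ∀ v, F v = φ v := by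
  have h0 : F 0 = 0 := by
    have := hF 0 0; simp only [add_zero] at this
    exact (left_eq_add.mp this)
  exact ⟨AddMonoidHom.toZModLinearMap p ⟨⟨F, h0⟩, hF⟩, fun v => rfl⟩

lemma additive_scalar (F : ZMod p → ZMod p) (hF : ∀ a b, F (a + b) = F a + F b) :
    ∀ z, F z = F 1 * z := by
  have h0 : F 0 = 0 := by
    have := hF 0 0; simp only [add_zero] at this
    exact (left_eq_add.mp this)
  intro z
  have := (AddMonoidHom.toZModLinearMap p (⟨⟨F, h0⟩, hF⟩ : ZMod p →+ ZMod p)).map_smul z 1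
  simpa [smul_eq_mul, mul_comm] using this

lemma two_ne (hodd : Odd p) : (2 : ZMod p) ≠ 0 := by
  intro h
  have hp := (Fact.out : p.Prime)
  have : (p : ℕ) ∣ 2 := by
    have := (ZMod.natCast_eq_zero_iff 2 p).mp (by exact_mod_cast h)
    exact this
  have h2 : p = 2 := (Nat.prime_dvd_prime_iff_eq hp Nat.prime_two).mp this
  obtain ⟨k, hk⟩ := hodd
  omega
end Helpers

theorem ES1_endomorphism_iff (p n : ℕ) [Fact p.Prime] (hodd : Odd p) (hn : 0 < n)
    (σ : ES1 p n → ES1 p n) :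
    (∀ x y : ES1 p n, σ (x * y) = σ x * σ y) ↔
      ∃ (A B C D : Matrix (Fin n) (Fin n) (ZMod p)) (l : ZMod p)
        (α β : (Fin n → ZMod p) →ₗ[ZMod p] ZMod p),
        (Matrix.fromBlocks A C D B)ᵀ * Delta p n * Matrix.fromBlocks A C D B
            = l • Delta p n ∧
        ∀ x : ES1 p n,
          σ x = ⟨A *ᵥ x.u + C *ᵥ x.w, D *ᵥ x.u + B *ᵥ x.w,
            α x.u + β x.w + l * x.z
              + (2 : ZMod p)⁻¹ * (x.u ⬝ᵥ ((Aᵀ * D) *ᵥ x.u))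
              + (2 : ZMod p)⁻¹ * (x.w ⬝ᵥ ((Cᵀ * B) *ᵥ x.w))
              + x.w ⬝ᵥ ((Cᵀ * D) *ᵥ x.u)⟩ := by
  have hp2 : (2 : ZMod p) ≠ 0 := two_ne hodd
  have h2 : (2 : ZMod p)⁻¹ * 2 = 1 := inv_mul_cancel₀ hp2
  constructor
  · intro hσ
    have hσ1 : σ 1 = 1 := by
      have h := hσ 1 1
      rw [one_mul] at h
      exact (left_eq_mul.mp h)
    have hσinv : ∀ x, σ x⁻¹ = (σ x)⁻¹ := by
      intro x
      have h := hσ x x⁻¹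
      rw [mul_inv_cancel, hσ1] at h
      exact (eq_inv_of_mul_eq_one_right h.symm)
    have hxx : ∀ u₁ u₂ : Fin n → ZMod p,
        (⟨u₁, 0, 0⟩ * ⟨u₂, 0, 0⟩ : ES1 p n) = ⟨u₁ + u₂, 0, 0⟩ := by
      intro u₁ u₂; ext <;> simp
    have hww : ∀ w₁ w₂ : Fin n → ZMod p,
        (⟨0, w₁, 0⟩ * ⟨0, w₂, 0⟩ : ES1 p n) = ⟨0, w₁ + w₂, 0⟩ := by
      intro w₁ w₂; ext <;> simp
    have hzz : ∀ a b : ZMod p, (⟨0, 0, a⟩ * ⟨0, 0, b⟩ : ES1 p n) = ⟨0, 0, a + b⟩ := by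
      intro a b; ext <;> simp
    have hcen : ∀ z : ZMod p, (σ ⟨0, 0, z⟩).u = 0 ∧ (σ ⟨0, 0, z⟩).w = 0 := by
      intro z
      set a : ES1 p n := ⟨Pi.single ⟨0, hn⟩ z, 0, 0⟩ with ha
      set b : ES1 p n := ⟨0, Pi.single ⟨0, hn⟩ 1, 0⟩ with hb
      have hc : (⟨0, 0, z⟩ : ES1 p n) = a * b * a⁻¹ * b⁻¹ := by
        ext <;> simp [ha, hb, single_dotProduct, dotProduct_single]
      rw [hc, hσ, hσ, hσ, hσinv, hσinv]
      constructor <;> simp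
    obtain ⟨A, hA⟩ := additive_to_matrix (fun v => (σ ⟨v, 0, 0⟩).u)
      (fun a b => by beta_reduce; rw [← hxx, hσ]; rfl)
    obtain ⟨D, hD⟩ := additive_to_matrix (fun v => (σ ⟨v, 0, 0⟩).w)
      (fun a b => by beta_reduce; rw [← hxx, hσ]; rfl)
    obtain ⟨C, hC⟩ := additive_to_matrix (fun v => (σ ⟨0, v, 0⟩).u)
      (fun a b => by beta_reduce; rw [← hww, hσ]; rfl)
    obtain ⟨B, hB⟩ := additive_to_matrix (fun v => (σ ⟨0, v, 0⟩).w)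
      (fun a b => by beta_reduce; rw [← hww, hσ]; rfl)
    set l : ZMod p := (σ ⟨0, 0, 1⟩).z with hldef
    have hl : ∀ z : ZMod p, (σ ⟨0, 0, z⟩).z = l * z := by
      have := additive_scalar (fun z => (σ (⟨0, 0, z⟩ : ES1 p n)).z)
        (fun a b => by beta_reduce; rw [← hzz, hσ]; simp [(hcen a).1])
      intro z
      have h := this z
      simpa [mul_comm] using h
    have hdec : ∀ (u w : Fin n → ZMod p) (z : ZMod p),
        (⟨u, w, z⟩ : ES1 p n) = ⟨u, 0, 0⟩ * ⟨0, w, 0⟩ * ⟨0, 0, z - u ⬝ᵥ w⟩ := by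
      intro u w z; ext <;> simp
    have hu : ∀ x : ES1 p n, (σ x).u = A *ᵥ x.u + C *ᵥ x.w := by
      rintro ⟨u, w, z⟩
      rw [hdec, hσ, hσ]
      simp [hA, hC, (hcen _).1]
    have hwc : ∀ x : ES1 p n, (σ x).w = D *ᵥ x.u + B *ᵥ x.w := by
      rintro ⟨u, w, z⟩
      rw [hdec, hσ, hσ]
      simp [hD, hB, (hcen _).2]
    have hφadd : ∀ a b, (σ (⟨a + b, 0, 0⟩ : ES1 p n)).z
        = (σ ⟨a, 0, 0⟩).z + (σ ⟨b, 0, 0⟩).z + a ⬝ᵥ ((Aᵀ * D) *ᵥ b) := by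
      intro a b
      rw [← hxx, hσ]
      simp [hA, hD, dph]
    have hψadd : ∀ a b, (σ (⟨0, a + b, 0⟩ : ES1 p n)).z
        = (σ ⟨0, a, 0⟩).z + (σ ⟨0, b, 0⟩).z + a ⬝ᵥ ((Cᵀ * B) *ᵥ b) := by
      intro a b
      rw [← hww, hσ]
      simp [hC, hB, dph]
    have hADsym : ∀ a b, a ⬝ᵥ ((Aᵀ * D) *ᵥ b) = b ⬝ᵥ ((Aᵀ * D) *ᵥ a) := by
      intro a b
      have h1 := hφadd a b
      have h2' := hφadd b a
      rw [add_comm b a] at h2'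
      linear_combination h2' - h1
    have hCBsym : ∀ a b, a ⬝ᵥ ((Cᵀ * B) *ᵥ b) = b ⬝ᵥ ((Cᵀ * B) *ᵥ a) := by
      intro a b
      have h1 := hψadd a b
      have h2' := hψadd b a
      rw [add_comm b a] at h2'
      linear_combination h2' - h1
    have hADmat : Dᵀ * A = Aᵀ * D := by
      refine ext_of_dp fun u v => ?_
      have ht : Dᵀ * A = (Aᵀ * D)ᵀ := by
        rw [Matrix.transpose_mul, Matrix.transpose_transpose]
      rw [ht, dpt]
      exact hADsym v u
    have hCBmat : Bᵀ * C = Cᵀ * B := by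
      refine ext_of_dp fun u v => ?_
      have ht : Bᵀ * C = (Cᵀ * B)ᵀ := by
        rw [Matrix.transpose_mul, Matrix.transpose_transpose]
      rw [ht, dpt]
      exact hCBsym v u
    have hxw : ∀ (u w : Fin n → ZMod p),
        (⟨u, 0, 0⟩ * ⟨0, w, 0⟩ : ES1 p n) = ⟨u, w, u ⬝ᵥ w⟩ := by
      intro u w; ext <;> simp
    have hwx : ∀ (u w : Fin n → ZMod p),
        (⟨0, w, 0⟩ * ⟨u, 0, 0⟩ : ES1 p n) = ⟨u, w, 0⟩ := by
      intro u w; ext <;> simp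
    have hsplit : ∀ (u w : Fin n → ZMod p),
        (⟨u, w, u ⬝ᵥ w⟩ : ES1 p n) = ⟨u, w, 0⟩ * ⟨0, 0, u ⬝ᵥ w⟩ := by
      intro u w; ext <;> simp
    have hcross : ∀ (u w : Fin n → ZMod p),
        u ⬝ᵥ ((Aᵀ * B) *ᵥ w) = w ⬝ᵥ ((Cᵀ * D) *ᵥ u) + l * (u ⬝ᵥ w) := by
      intro u w
      have e1 : (σ (⟨u, w, u ⬝ᵥ w⟩ : ES1 p n)).z
          = (σ ⟨u, 0, 0⟩).z + (σ ⟨0, w, 0⟩).z + u ⬝ᵥ ((Aᵀ * B) *ᵥ w) := by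
        rw [← hxw, hσ]; simp [hA, hB, dph]
      have e2 : (σ (⟨u, w, 0⟩ : ES1 p n)).z
          = (σ ⟨0, w, 0⟩).z + (σ ⟨u, 0, 0⟩).z + w ⬝ᵥ ((Cᵀ * D) *ᵥ u) := by
        rw [← hwx, hσ]; simp [hC, hD, dph]
      have e3 : (σ (⟨u, w, u ⬝ᵥ w⟩ : ES1 p n)).z
          = (σ (⟨u, w, 0⟩ : ES1 p n)).z + l * (u ⬝ᵥ w) := by
        rw [hsplit, hσ]; simp [hl, (hcen _).2]
      linear_combination e2 + e3 - e1
    have hABmat : Aᵀ * B = Dᵀ * C + l • (1 : Matrix (Fin n) (Fin n) (ZMod p)) := by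
      refine ext_of_dp fun u v => ?_
      have ht : Dᵀ * C = (Cᵀ * D)ᵀ := by
        rw [Matrix.transpose_mul, Matrix.transpose_transpose]
      rw [Matrix.add_mulVec, dotProduct_add, ht, dpt, Matrix.smul_mulVec,
        Matrix.one_mulVec, dotProduct_smul, smul_eq_mul, hcross]
    obtain ⟨α, hα⟩ := additive_to_linear
      (fun v => (σ ⟨v, 0, 0⟩).z - (2 : ZMod p)⁻¹ * (v ⬝ᵥ ((Aᵀ * D) *ᵥ v)))
      (fun a b => by
        beta_reduce
        have e := hφadd a b
        have es := hADsym b a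
        have hq : (a + b) ⬝ᵥ ((Aᵀ * D) *ᵥ (a + b))
            = a ⬝ᵥ ((Aᵀ * D) *ᵥ a) + b ⬝ᵥ ((Aᵀ * D) *ᵥ b)
              + a ⬝ᵥ ((Aᵀ * D) *ᵥ b) + b ⬝ᵥ ((Aᵀ * D) *ᵥ a) := by
          simp [Matrix.mulVec_add, add_dotProduct, dotProduct_add]
          ring
        rw [hq, e, es]
        linear_combination (-(a ⬝ᵥ ((Aᵀ * D) *ᵥ b))) * h2)
    obtain ⟨β, hβ⟩ := additive_to_linear
      (fun v => (σ ⟨0, v, 0⟩).z - (2 : ZMod p)⁻¹ * (v ⬝ᵥ ((Cᵀ * B) *ᵥ v)))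
      (fun a b => by
        beta_reduce
        have e := hψadd a b
        have es := hCBsym b a
        have hq : (a + b) ⬝ᵥ ((Cᵀ * B) *ᵥ (a + b))
            = a ⬝ᵥ ((Cᵀ * B) *ᵥ a) + b ⬝ᵥ ((Cᵀ * B) *ᵥ b)
              + a ⬝ᵥ ((Cᵀ * B) *ᵥ b) + b ⬝ᵥ ((Cᵀ * B) *ᵥ a) := by
          simp [Matrix.mulVec_add, add_dotProduct, dotProduct_add]
          ring
        rw [hq, e, es]
        linear_combination (-(a ⬝ᵥ ((Cᵀ * B) *ᵥ b))) * h2)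
    have hBAmat : Bᵀ * A = Cᵀ * D + l • (1 : Matrix (Fin n) (Fin n) (ZMod p)) := by
      have := congrArg Matrix.transpose hABmat
      simpa [Matrix.transpose_mul, Matrix.transpose_add, Matrix.transpose_smul] using this
    refine ⟨A, B, C, D, l, α, β, ?_, ?_⟩
    · rw [Delta, Matrix.fromBlocks_transpose, Matrix.fromBlocks_multiply,
        Matrix.fromBlocks_multiply, Matrix.fromBlocks_smul]
      refine Matrix.fromBlocks_inj.mpr ⟨?_, ?_, ?_, ?_⟩
      · simp only [Matrix.mul_zero, Matrix.mul_one, Matrix.mul_neg, Matrix.neg_mul,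
          Matrix.zero_mul, Matrix.one_mul, add_zero, zero_add, smul_zero]
        rw [hADmat]
        abel
      · simp only [Matrix.mul_zero, Matrix.mul_one, Matrix.mul_neg, Matrix.neg_mul,
          Matrix.zero_mul, Matrix.one_mul, add_zero, zero_add]
        rw [hABmat]
        abel
      · simp only [Matrix.mul_zero, Matrix.mul_one, Matrix.mul_neg, Matrix.neg_mul,
          Matrix.zero_mul, Matrix.one_mul, add_zero, zero_add]
        rw [hBAmat]
        simp [smul_neg]
      · simp only [Matrix.mul_zero, Matrix.mul_one, Matrix.mul_neg, Matrix.neg_mul,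
          Matrix.zero_mul, Matrix.one_mul, add_zero, zero_add, smul_zero]
        rw [hCBmat]
        abel
    · rintro ⟨u, w, z⟩
      have hz1 : (σ (⟨u, w, z⟩ : ES1 p n)).z
          = (σ ⟨u, 0, 0⟩).z + (σ ⟨0, w, 0⟩).z + u ⬝ᵥ ((Aᵀ * B) *ᵥ w) + l * (z - u ⬝ᵥ w) := by
        rw [hdec, hσ, hσ]
        simp [hA, hB, hl, (hcen _).1, (hcen _).2, dph]
      refine ES1.ext ?_ ?_ ?_
      · simpa using hu ⟨u, w, z⟩
      · simpa using hwc ⟨u, w, z⟩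
      · show (σ (⟨u, w, z⟩ : ES1 p n)).z = _
        rw [hz1, hcross]
        linear_combination (hα u) + (hβ w)
  · rintro ⟨A, B, C, D, l, α, β, hM, hform⟩
    rw [Delta, Matrix.fromBlocks_transpose, Matrix.fromBlocks_multiply,
      Matrix.fromBlocks_multiply, Matrix.fromBlocks_smul] at hM
    obtain ⟨m1, m2, m3, m4⟩ := Matrix.fromBlocks_inj.mp hM
    simp only [Matrix.mul_zero, Matrix.mul_one, Matrix.mul_neg, Matrix.neg_mul,
      Matrix.zero_mul, Matrix.one_mul, add_zero, zero_add, smul_zero] at m1 m2 m4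
    -- m1 : -(Dᵀ * A) + Aᵀ * D = 0, m2 : -(Dᵀ * C) + Aᵀ * B = l • 1, m4 : -(Bᵀ * C) + Cᵀ * B = 0
    have hAD : Aᵀ * D = Dᵀ * A := by
      have := m1
      linear_combination (norm := abel) this
    have hCB : Cᵀ * B = Bᵀ * C := by
      linear_combination (norm := abel) m4
    have hAB : Aᵀ * B = Dᵀ * C + l • (1 : Matrix (Fin n) (Fin n) (ZMod p)) := by
      linear_combination (norm := abel) m2
    have hADt : (Aᵀ * D)ᵀ = Aᵀ * D := by
      rw [Matrix.transpose_mul, Matrix.transpose_transpose, ← hAD]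
    have hCBt : (Cᵀ * B)ᵀ = Cᵀ * B := by
      rw [Matrix.transpose_mul, Matrix.transpose_transpose, ← hCB]
    have E1 : ∀ a b : Fin n → ZMod p,
        b ⬝ᵥ ((Aᵀ * D) *ᵥ a) = a ⬝ᵥ ((Aᵀ * D) *ᵥ b) := by
      intro a b; conv_lhs => rw [← hADt]
      rw [dpt]
    have E2 : ∀ a b : Fin n → ZMod p,
        b ⬝ᵥ ((Cᵀ * B) *ᵥ a) = a ⬝ᵥ ((Cᵀ * B) *ᵥ b) := by
      intro a b; conv_lhs => rw [← hCBt]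
      rw [dpt]
    have E3 : ∀ (a c : Fin n → ZMod p),
        a ⬝ᵥ ((Aᵀ * B) *ᵥ c) = c ⬝ᵥ ((Cᵀ * D) *ᵥ a) + l * (a ⬝ᵥ c) := by
      intro a c
      have ht : Dᵀ * C = (Cᵀ * D)ᵀ := by
        rw [Matrix.transpose_mul, Matrix.transpose_transpose]
      rw [hAB, Matrix.add_mulVec, dotProduct_add, ht, dpt, Matrix.smul_mulVec,
        Matrix.one_mulVec, dotProduct_smul, smul_eq_mul]
    intro x y
    rw [hform, hform, hform]
    refine ES1.ext ?_ ?_ ?_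
    · simp [Matrix.mulVec_add]
      abel
    · simp [Matrix.mulVec_add]
      abel
    · simp only [ES1.mul_u, ES1.mul_w, ES1.mul_z, map_add, Matrix.mulVec_add,
        dotProduct_add, add_dotProduct, dph]
      linear_combination (-1 : ZMod p) * (E3 x.u y.w)
        + (2 : ZMod p)⁻¹ * (E1 x.u y.u) + (2 : ZMod p)⁻¹ * (E2 x.w y.w)
        + (x.u ⬝ᵥ ((Aᵀ * D) *ᵥ y.u)) * h2 + (x.w ⬝ᵥ ((Cᵀ * B) *ᵥ y.w)) * h2
end

section
/- A map σ : G → G is an automorphism of G = ES_1(p,n) if and only if there exist matrices A,B,C,D ∈ M_n(𝔽_p) with M = [[A,C],[D,B]] ∈ GL_{2n}(𝔽_p) satisfying MᵗΔM = lΔ for some l ∈ 𝔽_p^* (l ≠ 0), together with linear functionals α, β : 𝔽_p^n → 𝔽_p, such that for all (u,w,z) ∈ G: σ(u,w,z) = (Au+Cw, Du+Bw, α(u)+β(w)+lz+(1/2)uᵗ(AᵗD)u+(1/2)wᵗ(CᵗB)w+wᵗ(CᵗD)u). -/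
open Matrix

/-! An automorphism preserves the centre `{(0, 0, z)}`, on which it acts as `z ↦ l z`, and it
induces a linear automorphism `M` of the abelianisation `𝔽_p^{2n}`. Since commutators are
`⁅x, y⁆ = (0, 0, ω(x, y))` with `ω` the symplectic form of `Δ`, applying the automorphism to them
gives `ω(Mx, My) = l ω(x, y)`, i.e. `MᵀΔM = lΔ`. Conversely, because `2` is invertible the
quadratic terms of the displayed formula make it a homomorphism for every symplectic similitude
`(M, l)`, and it is bijective. Finally, an automorphism and the displayed map with `α = β = 0`
agree modulo the centre, so the difference of their `z`-coordinates is a homomorphism to `𝔽_p`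
vanishing on the centre, i.e. a linear functional `α(u) + β(w)`.
-/

section BilinearForm

variable {R m : Type*} [CommRing R] [Fintype m]

theorem Matrix.mulVec_dotProduct_mulVec {k k' : Type*} [Fintype k] [Fintype k']
    (M : Matrix m k R) (N : Matrix m k' R) (x : k → R) (y : k' → R) :
    (M *ᵥ x) ⬝ᵥ (N *ᵥ y) = x ⬝ᵥ ((Mᵀ * N) *ᵥ y) := by
  rw [← mulVec_mulVec, dotProduct_mulVec x Mᵀ, vecMul_transpose]

theorem Matrix.transpose_mul_mul_eq_smul_iff [DecidableEq m] (M J : Matrix m m R) (l : R) :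
    Mᵀ * J * M = l • J ↔ ∀ v w, (M *ᵥ v) ⬝ᵥ (J *ᵥ (M *ᵥ w)) = l * (v ⬝ᵥ (J *ᵥ w)) := by
  have hlhs : ∀ v w, (M *ᵥ v) ⬝ᵥ (J *ᵥ (M *ᵥ w)) = v ⬝ᵥ ((Mᵀ * J * M) *ᵥ w) :=
    fun v w => by rw [mulVec_mulVec, mulVec_dotProduct_mulVec, Matrix.mul_assoc]
  have hrhs : ∀ v w, l * (v ⬝ᵥ (J *ᵥ w)) = v ⬝ᵥ ((l • J) *ᵥ w) :=
    fun v w => by rw [smul_mulVec, dotProduct_smul, smul_eq_mul]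
  simp_rw [hlhs, hrhs]
  refine ⟨fun h v w => by rw [h], fun h => ?_⟩
  ext i j
  simpa [mulVec_single, single_dotProduct] using h (Pi.single i 1) (Pi.single j 1)

end BilinearForm

theorem dotProduct_Delta_mulVec {p n : ℕ} (u₁ w₁ u₂ w₂ : Fin n → ZMod p) :
    Sum.elim u₁ w₁ ⬝ᵥ (Delta p n *ᵥ Sum.elim u₂ w₂) = u₁ ⬝ᵥ w₂ - u₂ ⬝ᵥ w₁ := by
  simp [Delta, fromBlocks_mulVec, neg_mulVec, dotProduct_comm w₁, sub_eq_add_neg]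

theorem fromBlocks_transpose_mul_Delta_mul_eq_smul_iff {p n : ℕ}
    (A B C D : Matrix (Fin n) (Fin n) (ZMod p)) (l : ZMod p) :
    (fromBlocks A C D B)ᵀ * Delta p n * fromBlocks A C D B = l • Delta p n ↔
      ∀ u₁ w₁ u₂ w₂ : Fin n → ZMod p,
        (A *ᵥ u₁ + C *ᵥ w₁) ⬝ᵥ (D *ᵥ u₂ + B *ᵥ w₂)
          - (A *ᵥ u₂ + C *ᵥ w₂) ⬝ᵥ (D *ᵥ u₁ + B *ᵥ w₁) = l * (u₁ ⬝ᵥ w₂ - u₂ ⬝ᵥ w₁) := by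
  have hform : ∀ u₁ w₁ u₂ w₂ : Fin n → ZMod p,
      (fromBlocks A C D B *ᵥ Sum.elim u₁ w₁)
          ⬝ᵥ (Delta p n *ᵥ (fromBlocks A C D B *ᵥ Sum.elim u₂ w₂))
        = (A *ᵥ u₁ + C *ᵥ w₁) ⬝ᵥ (D *ᵥ u₂ + B *ᵥ w₂)
          - (A *ᵥ u₂ + C *ᵥ w₂) ⬝ᵥ (D *ᵥ u₁ + B *ᵥ w₁) := fun u₁ w₁ u₂ w₂ => by
    simp only [fromBlocks_mulVec, Sum.elim_comp_inl, Sum.elim_comp_inr, dotProduct_Delta_mulVec]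
  rw [transpose_mul_mul_eq_smul_iff]
  refine ⟨fun h u₁ w₁ u₂ w₂ => ?_, fun h v w => ?_⟩
  · rw [← hform, h, dotProduct_Delta_mulVec]
  · rw [← Sum.elim_comp_inl_inr v, ← Sum.elim_comp_inl_inr w, hform, h,
      dotProduct_Delta_mulVec]

namespace ES1

open scoped commutatorElement

variable {p n : ℕ}

def central (z : ZMod p) : ES1 p n := ⟨0, 0, z⟩

@[simp] theorem central_u (z : ZMod p) : (central z : ES1 p n).u = 0 := rfl
@[simp] theorem central_w (z : ZMod p) : (central z : ES1 p n).w = 0 := rfl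
@[simp] theorem central_z (z : ZMod p) : (central z : ES1 p n).z = z := rfl

theorem central_zero : (central 0 : ES1 p n) = 1 := rfl

theorem central_add (a b : ZMod p) : (central (a + b) : ES1 p n) = central a * central b := by
  ext <;> simp

theorem mem_center_iff {x : ES1 p n} : x ∈ Set.center (ES1 p n) ↔ x = central x.z := by
  rw [Semigroup.mem_center_iff]
  refine ⟨fun h => ?_, fun h g => ?_⟩
  · have hu : x.u = 0 := funext fun i => by
      simpa [dotProduct_single] using congrArg ES1.z (h ⟨0, Pi.single i 1, 0⟩)
    have hw : x.w = 0 := funext fun i => by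
      simpa [single_dotProduct] using (congrArg ES1.z (h ⟨Pi.single i 1, 0, 0⟩)).symm
    ext <;> simp [hu, hw]
  · rw [h]
    ext <;> simp [add_comm]

theorem central_mem_center (z : ZMod p) : (central z : ES1 p n) ∈ Set.center (ES1 p n) :=
  mem_center_iff.2 rfl

theorem commutatorElement_eq (x y : ES1 p n) :
    ⁅x, y⁆ = central (x.u ⬝ᵥ y.w - y.u ⬝ᵥ x.w) := by
  ext <;> simp [commutatorElement_def, add_dotProduct]
  ring

theorem exists_map_central [Nontrivial (ZMod p)] (e : ES1 p n ≃* ES1 p n) :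
    ∃ l ≠ 0, ∀ z, e (central z) = central (l * z) := by
  have hc : ∀ z, e (central z) = central (e (central z)).z := fun z =>
    mem_center_iff.1 (MulEquivClass.apply_mem_center e (central_mem_center _))
  let f : ZMod p →+ ZMod p := AddMonoidHom.mk' (fun z => (e (central z)).z) fun a b => by
    rw [central_add, map_mul, hc a, hc b]
    simp
  have hf : ∀ z, f z = f 1 * z := fun z => by simpa [mul_comm] using ZMod.map_smul f z 1
  refine ⟨f 1, fun h0 => ?_, fun z => (hc z).trans (congrArg central (hf z))⟩
  have h1 : e (central 1) = e 1 := by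
    rw [hc, map_one, ← central_zero]
    exact congrArg central h0
  exact one_ne_zero (congrArg ES1.z (e.injective h1))

/-- The projection onto the abelianisation `ES1 p n ⧸ center ≅ 𝔽_p^{2n}`. -/
def toVec (x : ES1 p n) : Fin n ⊕ Fin n → ZMod p := Sum.elim x.u x.w

def ofVec (v : Fin n ⊕ Fin n → ZMod p) : ES1 p n := ⟨v ∘ Sum.inl, v ∘ Sum.inr, 0⟩

@[simp] theorem toVec_mul (x y : ES1 p n) : toVec (x * y) = toVec x + toVec y := by
  simp [toVec, Sum.elim_add_add]

@[simp] theorem toVec_one : toVec (1 : ES1 p n) = 0 := Sum.elim_zero_zero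

@[simp] theorem toVec_ofVec (v : Fin n ⊕ Fin n → ZMod p) : toVec (ofVec v : ES1 p n) = v :=
  Sum.elim_comp_inl_inr v

theorem toVec_eq_zero_iff {x : ES1 p n} : toVec x = 0 ↔ x = central x.z := by
  rw [toVec, ← Sum.elim_zero_zero, Sum.elim_eq_iff]
  refine ⟨fun ⟨hu, hw⟩ => ?_, fun h => ?_⟩
  · ext <;> simp [hu, hw]
  · rw [h]
    simp

theorem toVec_eq_fromBlocks_mulVec_iff {x y : ES1 p n}
    {A B C D : Matrix (Fin n) (Fin n) (ZMod p)} :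
    toVec y = fromBlocks A C D B *ᵥ toVec x ↔
      y.u = A *ᵥ x.u + C *ᵥ x.w ∧ y.w = D *ᵥ x.u + B *ᵥ x.w := by
  simp [toVec, fromBlocks_mulVec, Sum.elim_eq_iff]

theorem toVec_map_eq (e : ES1 p n ≃* ES1 p n) {x y : ES1 p n} (h : toVec x = toVec y) :
    toVec (e x) = toVec (e y) := by
  obtain ⟨hu, hw⟩ := Sum.elim_eq_iff.1 h
  have hx : x = y * central (x.z - y.z) := by ext <;> simp [hu, hw]
  rw [hx, map_mul, toVec_mul, toVec_eq_zero_iff.2 (mem_center_iff.1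
    (MulEquivClass.apply_mem_center e (central_mem_center _))), add_zero]

theorem exists_isUnit_toVec_map (e : ES1 p n ≃* ES1 p n) :
    ∃ M : Matrix (Fin n ⊕ Fin n) (Fin n ⊕ Fin n) (ZMod p),
      IsUnit M ∧ ∀ x, toVec (e x) = M *ᵥ toVec x := by
  let L : (Fin n ⊕ Fin n → ZMod p) →+ (Fin n ⊕ Fin n → ZMod p) :=
    AddMonoidHom.mk' (fun v => toVec (e (ofVec v))) fun v w => by
      rw [← toVec_mul, ← map_mul]
      exact toVec_map_eq e (by simp)
  have hL : ∀ x, toVec (e x) = L (toVec x) := fun x => toVec_map_eq e (by simp)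
  have hM : ∀ v, LinearMap.toMatrix' (L.toZModLinearMap p) *ᵥ v = L v :=
    LinearMap.toMatrix'_mulVec _
  refine ⟨_, mulVec_surjective_iff_isUnit.1 fun v => ?_, fun x => by rw [hM, hL]⟩
  exact ⟨toVec (e.symm (ofVec v)), by rw [hM, ← hL, e.apply_symm_apply, toVec_ofVec]⟩

instance [NeZero p] : Finite (ES1 p n) :=
  Finite.of_injective (fun x => (x.u, x.w, x.z)) fun x y h => by
    simp only [Prod.mk.injEq] at h
    exact ES1.ext h.1 h.2.1 h.2.2

theorem exists_linearMap_eq_of_map_mul (ψ : ES1 p n → ZMod p)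
    (hψ : ∀ x y, ψ (x * y) = ψ x + ψ y) (hc : ∀ z, ψ (central z) = 0) :
    ∃ α β : (Fin n → ZMod p) →ₗ[ZMod p] ZMod p, ∀ x, ψ x = α x.u + β x.w := by
  let α : (Fin n → ZMod p) →+ ZMod p := AddMonoidHom.mk' (fun u => ψ ⟨u, 0, 0⟩) fun a b => by
    rw [← hψ]
    congr 1
    ext <;> simp
  let β : (Fin n → ZMod p) →+ ZMod p := AddMonoidHom.mk' (fun w => ψ ⟨0, w, 0⟩) fun a b => by
    rw [← hψ]
    congr 1
    ext <;> simp
  refine ⟨α.toZModLinearMap p, β.toZModLinearMap p, fun x => ?_⟩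
  have hx : x = ⟨0, x.w, 0⟩ * ⟨x.u, 0, 0⟩ * central x.z := by ext <;> simp
  conv_lhs => rw [hx, hψ, hψ, hc, add_zero, add_comm]
  rfl

def standardMap (A B C D : Matrix (Fin n) (Fin n) (ZMod p)) (l : ZMod p)
    (α β : (Fin n → ZMod p) →ₗ[ZMod p] ZMod p) (x : ES1 p n) : ES1 p n :=
  ⟨A *ᵥ x.u + C *ᵥ x.w, D *ᵥ x.u + B *ᵥ x.w,
    α x.u + β x.w + l * x.z
      + (2 : ZMod p)⁻¹ * (x.u ⬝ᵥ ((Aᵀ * D) *ᵥ x.u))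
      + (2 : ZMod p)⁻¹ * (x.w ⬝ᵥ ((Cᵀ * B) *ᵥ x.w))
      + x.w ⬝ᵥ ((Cᵀ * D) *ᵥ x.u)⟩

section standardMap

variable {A B C D : Matrix (Fin n) (Fin n) (ZMod p)} {l : ZMod p}
  {α β : (Fin n → ZMod p) →ₗ[ZMod p] ZMod p}

theorem toVec_standardMap (x : ES1 p n) :
    toVec (standardMap A B C D l α β x) = fromBlocks A C D B *ᵥ toVec x :=
  toVec_eq_fromBlocks_mulVec_iff.2 ⟨rfl, rfl⟩

theorem standardMap_central (z : ZMod p) :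
    standardMap A B C D l α β (central z : ES1 p n) = central (l * z) := by
  ext <;> simp [standardMap]

theorem standardMap_mul (h2 : IsUnit (2 : ZMod p))
    (hsymp : (fromBlocks A C D B)ᵀ * Delta p n * fromBlocks A C D B = l • Delta p n)
    (x y : ES1 p n) :
    standardMap A B C D l α β (x * y) =
      standardMap A B C D l α β x * standardMap A B C D l α β y := by
  have hS := (fromBlocks_transpose_mul_Delta_mul_eq_smul_iff A B C D l).1 hsymp
  -- `AᵀD` and `CᵀB` are symmetric and `AᵀB - DᵀC = l • 1`: this is what polarisation needs.
  have hAD := hS x.u 0 y.u 0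
  have hCB := hS 0 x.w 0 y.w
  have hAB := hS x.u 0 0 y.w
  simp only [mulVec_zero, add_zero, zero_add, dotProduct_zero, zero_dotProduct, sub_zero]
    at hAD hCB hAB
  have hinv := ZMod.inv_mul_of_unit 2 h2
  ext : 1
  · simp only [standardMap, mul_u, mul_w, mulVec_add]
    abel
  · simp only [standardMap, mul_u, mul_w, mulVec_add]
    abel
  · simp only [standardMap, mul_u, mul_w, mul_z, ← mulVec_dotProduct_mulVec, mulVec_add,
      add_dotProduct, dotProduct_add, map_add]
    linear_combination (-2⁻¹ : ZMod p) * hAD - 2⁻¹ * hCB - hAB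
      + ((A *ᵥ x.u) ⬝ᵥ (D *ᵥ y.u) + (C *ᵥ x.w) ⬝ᵥ (B *ᵥ y.w)) * hinv

theorem standardMap_bijective [Fact p.Prime] (hM : IsUnit (fromBlocks A C D B)) (hl : l ≠ 0)
    (hmul : ∀ x y : ES1 p n, standardMap A B C D l α β (x * y) =
      standardMap A B C D l α β x * standardMap A B C D l α β y) :
    Function.Bijective (standardMap A B C D l α β) := by
  let f : ES1 p n →* ES1 p n := MonoidHom.mk' _ hmul
  refine Finite.injective_iff_bijective.1 ((injective_iff_map_eq_one f).2 fun x hx => ?_)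
  have hMx : fromBlocks A C D B *ᵥ toVec x = fromBlocks A C D B *ᵥ 0 := by
    rw [← toVec_standardMap (l := l) (α := α) (β := β), mulVec_zero, ← toVec_one]
    exact congrArg toVec hx
  have hv : toVec x = 0 := mulVec_injective_iff_isUnit.2 hM hMx
  rw [toVec_eq_zero_iff] at hv
  rw [hv] at hx ⊢
  have hz : l * x.z = 0 := congrArg ES1.z ((standardMap_central x.z).symm.trans hx)
  rw [(mul_eq_zero.1 hz).resolve_left hl, central_zero]

end standardMap

theorem exists_eq_standardMap [Fact p.Prime] (h2 : IsUnit (2 : ZMod p))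
    (e : ES1 p n ≃* ES1 p n) :
    ∃ (A B C D : Matrix (Fin n) (Fin n) (ZMod p)) (l : ZMod p)
      (α β : (Fin n → ZMod p) →ₗ[ZMod p] ZMod p),
      IsUnit (fromBlocks A C D B) ∧ l ≠ 0 ∧
      (fromBlocks A C D B)ᵀ * Delta p n * fromBlocks A C D B = l • Delta p n ∧
      ⇑e = standardMap A B C D l α β := by
  obtain ⟨l, hl, he_central⟩ := exists_map_central e
  obtain ⟨M, hM, he_toVec⟩ := exists_isUnit_toVec_map e
  obtain ⟨A, C, D, B, rfl⟩ : ∃ A C D B, M = fromBlocks A C D B :=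
    ⟨_, _, _, _, (fromBlocks_toBlocks M).symm⟩
  have he_uw (x : ES1 p n) := toVec_eq_fromBlocks_mulVec_iff.1 (he_toVec x)
  have hsymp : (fromBlocks A C D B)ᵀ * Delta p n * fromBlocks A C D B = l • Delta p n := by
    refine (fromBlocks_transpose_mul_Delta_mul_eq_smul_iff A B C D l).2 fun u₁ w₁ u₂ w₂ => ?_
    have h := congrArg ES1.z (map_commutatorElement e ⟨u₁, w₁, 0⟩ ⟨u₂, w₂, 0⟩)
    simp only [commutatorElement_eq, he_central, central_z, (he_uw _).1, (he_uw _).2] at h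
    exact h.symm
  let s : ES1 p n → ES1 p n := standardMap A B C D l 0 0
  have hs_mul : ∀ x y, s (x * y) = s x * s y := standardMap_mul h2 hsymp
  have he_s : ∀ x, (e x).u = (s x).u ∧ (e x).w = (s x).w := he_uw
  obtain ⟨α, β, hαβ⟩ := exists_linearMap_eq_of_map_mul (fun x => (e x).z - (s x).z)
    (fun x y => by
      simp only [map_mul, hs_mul, mul_z, (he_s x).1, (he_s y).2]
      ring)
    (fun z => by simp [s, he_central, standardMap_central])
  refine ⟨A, B, C, D, l, α, β, hM, hl, hsymp, funext fun x => ?_⟩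
  ext : 1
  · exact (he_uw x).1
  · exact (he_uw x).2
  · have := hαβ x
    simp only [s, standardMap, LinearMap.zero_apply] at this ⊢
    linear_combination this

end ES1

theorem ES1_automorphism_iff_general (p n : ℕ) [Fact p.Prime] (hodd : Odd p)
    (σ : ES1 p n → ES1 p n) :
    ((∀ x y : ES1 p n, σ (x * y) = σ x * σ y) ∧ Function.Bijective σ) ↔
      ∃ (A B C D : Matrix (Fin n) (Fin n) (ZMod p)) (l : ZMod p)
        (α β : (Fin n → ZMod p) →ₗ[ZMod p] ZMod p),
        IsUnit (Matrix.fromBlocks A C D B) ∧ l ≠ 0 ∧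
        (Matrix.fromBlocks A C D B)ᵀ * Delta p n * Matrix.fromBlocks A C D B
            = l • Delta p n ∧
        ∀ x : ES1 p n,
          σ x = ⟨A *ᵥ x.u + C *ᵥ x.w, D *ᵥ x.u + B *ᵥ x.w,
            α x.u + β x.w + l * x.z
              + (2 : ZMod p)⁻¹ * (x.u ⬝ᵥ ((Aᵀ * D) *ᵥ x.u))
              + (2 : ZMod p)⁻¹ * (x.w ⬝ᵥ ((Cᵀ * B) *ᵥ x.w))
              + x.w ⬝ᵥ ((Cᵀ * D) *ᵥ x.u)⟩ := by
  have h2 : IsUnit (2 : ZMod p) := by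
    refine (Ring.two_ne_zero ?_).isUnit
    rw [ZMod.ringChar_zmod_n]
    rintro rfl
    exact (Nat.not_odd_iff_even.2 even_two) hodd
  constructor
  · rintro ⟨hmul, hbij⟩
    obtain ⟨A, B, C, D, l, α, β, hM, hl, hsymp, he⟩ :=
      ES1.exists_eq_standardMap h2 (MulEquiv.ofBijective (MonoidHom.mk' σ hmul) hbij)
    exact ⟨A, B, C, D, l, α, β, hM, hl, hsymp, congrFun he⟩
  · rintro ⟨A, B, C, D, l, α, β, hM, hl, hsymp, hσ⟩
    obtain rfl : σ = ES1.standardMap A B C D l α β := funext hσ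
    have hmul := ES1.standardMap_mul (α := α) (β := β) h2 hsymp
    exact ⟨hmul, ES1.standardMap_bijective hM hl hmul⟩

theorem ES1_automorphism_iff (p n : ℕ) [Fact p.Prime] (hodd : Odd p) (hn : 0 < n)
    (σ : ES1 p n → ES1 p n) :
    ((∀ x y : ES1 p n, σ (x * y) = σ x * σ y) ∧ Function.Bijective σ) ↔
      ∃ (A B C D : Matrix (Fin n) (Fin n) (ZMod p)) (l : ZMod p)
        (α β : (Fin n → ZMod p) →ₗ[ZMod p] ZMod p),
        IsUnit (Matrix.fromBlocks A C D B) ∧ l ≠ 0 ∧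
        (Matrix.fromBlocks A C D B)ᵀ * Delta p n * Matrix.fromBlocks A C D B
            = l • Delta p n ∧
        ∀ x : ES1 p n,
          σ x = ⟨A *ᵥ x.u + C *ᵥ x.w, D *ᵥ x.u + B *ᵥ x.w,
            α x.u + β x.w + l * x.z
              + (2 : ZMod p)⁻¹ * (x.u ⬝ᵥ ((Aᵀ * D) *ᵥ x.u))
              + (2 : ZMod p)⁻¹ * (x.w ⬝ᵥ ((Cᵀ * B) *ᵥ x.w))
              + x.w ⬝ᵥ ((Cᵀ * D) *ᵥ x.u)⟩ :=
  ES1_automorphism_iff_general p n hodd σ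
end

section
/- For G = ES_1(p,n) and g ∈ G, the endomorphism semigroup image {σ(g) : σ ∈ End(G)} equals: {e} if g = e; Z(G) if g ∈ Z(G)∖{e}; and all of G if g ∈ G∖Z(G). In particular these images have cardinalities 1, p and p^{2n+1} respectively. -/
open Matrix

namespace ES1Aux

open ES1

variable {p n : ℕ}

theorem mem_center_iff (x : ES1 p n) :
    x ∈ Subgroup.center (ES1 p n) ↔ x.u = 0 ∧ x.w = 0 := by
  rw [Subgroup.mem_center_iff]
  constructor
  · intro h
    constructor
    · funext j
      have := congrArg ES1.z (h ⟨0, Pi.single j 1, 0⟩)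
      simpa [dotProduct_single] using this.symm
    · funext j
      have := congrArg ES1.z (h ⟨Pi.single j 1, 0, 0⟩)
      simpa [single_dotProduct] using this
  · rintro ⟨h1, h2⟩ y
    ext <;> simp [h1, h2] <;> ring

theorem commutator_mem_center (x y : ES1 p n) :
    x * y * x⁻¹ * y⁻¹ ∈ Subgroup.center (ES1 p n) := by
  rw [mem_center_iff]
  constructor <;> simp

/-- The endomorphism (u,w,z) ↦ (c•u, w, c•z). -/
def scaleHom (c : ZMod p) : ES1 p n →* ES1 p n where
  toFun x := ⟨c • x.u, x.w, c * x.z⟩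
  map_one' := by ext <;> simp
  map_mul' x y := by
    ext <;> simp [smul_dotProduct, smul_eq_mul] <;> ring

/-- A "rank one" endomorphism determined by linear functionals a, b and target h. -/
def rankOneHom (a b : Fin n → ZMod p) (h : ES1 p n) (d t : ZMod p)
    (hd : 2 * d = h.u ⬝ᵥ h.w) : ES1 p n →* ES1 p n where
  toFun x := ⟨(a ⬝ᵥ x.u + b ⬝ᵥ x.w) • h.u, (a ⬝ᵥ x.u + b ⬝ᵥ x.w) • h.w,
    (a ⬝ᵥ x.u + b ⬝ᵥ x.w) ^ 2 * d + t * (a ⬝ᵥ x.u + b ⬝ᵥ x.w)⟩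
  map_one' := by ext <;> simp
  map_mul' x y := by
    ext j
    · simp [dotProduct_add, add_smul]; ring
    · simp [dotProduct_add, add_smul]; ring
    · simp only [mul_u, mul_w, mul_z, dotProduct_add, smul_dotProduct,
        dotProduct_smul, smul_eq_mul]
      linear_combination (a ⬝ᵥ x.u + b ⬝ᵥ x.w) * (a ⬝ᵥ y.u + b ⬝ᵥ y.w) * hd

end ES1Aux

open ES1Aux

theorem ES1_endomorphism_images (p n : ℕ) [Fact p.Prime] (hodd : Odd p) (hn : 0 < n)
    (g : ES1 p n) :
    (g = 1 → {h | ∃ σ : ES1 p n →* ES1 p n, σ g = h} = {(1 : ES1 p n)}) ∧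
    (g ∈ Subgroup.center (ES1 p n) → g ≠ 1 →
      {h | ∃ σ : ES1 p n →* ES1 p n, σ g = h}
        = (Subgroup.center (ES1 p n) : Set (ES1 p n))) ∧
    (g ∉ Subgroup.center (ES1 p n) →
      {h | ∃ σ : ES1 p n →* ES1 p n, σ g = h} = Set.univ) ∧
    Nat.card (Subgroup.center (ES1 p n)) = p ∧
    Nat.card (ES1 p n) = p ^ (2 * n + 1) := by
  have hp : p.Prime := Fact.out
  refine ⟨?_, ?_, ?_, ?_, ?_⟩
  · rintro rfl
    ext h
    simp only [Set.mem_setOf_eq, Set.mem_singleton_iff]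
    constructor
    · rintro ⟨σ, rfl⟩; exact map_one σ
    · rintro rfl; exact ⟨MonoidHom.id _, map_one _⟩
  · intro hc hne
    obtain ⟨hu, hw⟩ := (mem_center_iff g).mp hc
    have hz : g.z ≠ 0 := by
      intro h0
      exact hne (by ext <;> simp [hu, hw, h0])
    ext h
    simp only [Set.mem_setOf_eq, SetLike.mem_coe]
    constructor
    · rintro ⟨σ, rfl⟩
      set a : ES1 p n := ⟨Pi.single ⟨0, hn⟩ 1, 0, 0⟩
      set b : ES1 p n := ⟨0, Pi.single ⟨0, hn⟩ g.z, 0⟩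
      have hg : g = a * b * a⁻¹ * b⁻¹ := by
        ext <;> simp [a, b, hu, hw, single_dotProduct, dotProduct_single,
          Pi.single_apply] <;> ring
      rw [hg]
      simp only [_root_.map_mul, map_inv]
      exact commutator_mem_center _ _
    · intro hh
      obtain ⟨hhu, hhw⟩ := (mem_center_iff h).mp hh
      refine ⟨scaleHom (h.z * g.z⁻¹), ?_⟩
      ext <;> simp [scaleHom, hu, hw, hhu, hhw, mul_assoc, inv_mul_cancel₀ hz]
  · intro hc
    rw [mem_center_iff, not_and_or] at hc
    have h2 : (2 : ZMod p) ≠ 0 := by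
      intro h0
      have hdvd : p ∣ 2 := by
        exact_mod_cast (ZMod.natCast_eq_zero_iff 2 p).mp (by exact_mod_cast h0)
      have : p = 2 := (Nat.prime_dvd_prime_iff_eq hp Nat.prime_two).mp hdvd
      subst this
      exact absurd hodd (by decide)
    obtain ⟨a, b, hab⟩ : ∃ a b : Fin n → ZMod p, a ⬝ᵥ g.u + b ⬝ᵥ g.w = 1 := by
      rcases hc with hgu | hgw
      · obtain ⟨j, hj⟩ := Function.ne_iff.mp hgu
        exact ⟨Pi.single j (g.u j)⁻¹, 0, by
          simp [single_dotProduct, inv_mul_cancel₀ (by simpa using hj)]⟩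
      · obtain ⟨j, hj⟩ := Function.ne_iff.mp hgw
        exact ⟨0, Pi.single j (g.w j)⁻¹, by
          simp [single_dotProduct, inv_mul_cancel₀ (by simpa using hj)]⟩
    ext h
    simp only [Set.mem_setOf_eq, Set.mem_univ, iff_true]
    refine ⟨rankOneHom a b h ((2 : ZMod p)⁻¹ * (h.u ⬝ᵥ h.w)) (h.z - (2 : ZMod p)⁻¹ * (h.u ⬝ᵥ h.w))
      (by rw [← mul_assoc, mul_inv_cancel₀ h2, one_mul]), ?_⟩
    ext <;> simp [rankOneHom, hab] <;> ring
  · have e : Subgroup.center (ES1 p n) ≃ ZMod p := by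
      refine ⟨fun x => x.1.z, fun z => ⟨⟨0, 0, z⟩, by rw [mem_center_iff]; simp⟩, ?_, ?_⟩
      · rintro ⟨x, hx⟩
        obtain ⟨h1, h2⟩ := (mem_center_iff x).mp hx
        ext <;> simp [h1, h2]
      · intro z; rfl
    rw [Nat.card_congr e, Nat.card_zmod]
  · have e : ES1 p n ≃ (Fin n → ZMod p) × (Fin n → ZMod p) × ZMod p :=
      ⟨fun x => (x.u, x.w, x.z), fun x => ⟨x.1, x.2.1, x.2.2⟩, fun x => rfl, fun x => rfl⟩
    rw [Nat.card_congr e]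
    simp [Nat.card_prod, Nat.card_fun, Nat.card_zmod, Nat.card_eq_fintype_card]
    ring
end

section
/- For G = ES_2(p,n), the endomorphism semigroup does not induce a partial order on automorphism orbits: there exist elements x, y ∈ G and endomorphisms σ, τ of G with σ(x) = y and τ(y) = x, but no automorphism of G maps x to y. Concretely, for distinct b₁, b₂ ∈ (ℤ/pℤ)∖{0}, the elements x = (0,0,b₁,0) and y = (0,0,b₂,0) are endomorphic to each other but not automorphic. -/
open Matrix

/-- The additive embedding `ℤ/pℤ → ℤ/p²ℤ`, `a ↦ p·a`. -/
def emb (p : ℕ) (a : ZMod p) : ZMod (p ^ 2) := (p : ZMod (p ^ 2)) * (a.val : ZMod (p ^ 2))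

/-- Reduction modulo `p`, `ℤ/p²ℤ → ℤ/pℤ`. -/
def red (p : ℕ) : ZMod (p ^ 2) →+* ZMod p :=
  ZMod.castHom (dvd_pow_self p (by norm_num)) (ZMod p)

section EmbLemmas

variable {p : ℕ} [NeZero p]

theorem emb_sq_zero : (p : ZMod (p ^ 2)) * (p : ZMod (p ^ 2)) = 0 := by
  have h : ((p ^ 2 : ℕ) : ZMod (p ^ 2)) = 0 := ZMod.natCast_self _
  push_cast at h
  linear_combination h

theorem emb_mod (k : ℕ) :
    (p : ZMod (p ^ 2)) * ((k % p : ℕ) : ZMod (p ^ 2)) = (p : ZMod (p ^ 2)) * (k : ℕ) := by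
  conv_rhs => rw [← Nat.div_add_mod k p]
  push_cast
  linear_combination (-((k / p : ℕ) : ZMod (p ^ 2))) * emb_sq_zero (p := p)

theorem emb_add (a b : ZMod p) : emb p (a + b) = emb p a + emb p b := by
  unfold emb
  rw [ZMod.val_add, emb_mod]
  push_cast
  ring

theorem emb_zero : emb p (0 : ZMod p) = 0 := by
  simp [emb]

theorem emb_neg (a : ZMod p) : emb p (-a) = -emb p a := by
  have h := emb_add (p := p) (-a) a
  rw [neg_add_cancel, emb_zero] at h
  exact eq_neg_of_add_eq_zero_left h.symm

theorem emb_sub (a b : ZMod p) : emb p (a - b) = emb p a - emb p b := by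
  rw [sub_eq_add_neg, emb_add, emb_neg]; ring

theorem emb_mul_emb (a b : ZMod p) : emb p a * emb p b = 0 := by
  unfold emb
  calc (p : ZMod (p ^ 2)) * (a.val : ZMod (p ^ 2)) * ((p : ZMod (p ^ 2)) * (b.val : ZMod (p ^ 2)))
      = ((p : ZMod (p^2)) * (p : ZMod (p^2))) * ((a.val : ZMod (p ^ 2)) * (b.val : ZMod (p ^ 2))) := by ring
    _ = 0 := by rw [emb_sq_zero]; ring

theorem red_emb (a : ZMod p) : red p (emb p a) = 0 := by
  unfold emb
  rw [_root_.map_mul, map_natCast, ZMod.natCast_self]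
  ring

end EmbLemmas

/-- The extra-special `p`-group of exponent `p²` and order `p^(2(m+1)+1)`
(so `n = m + 1` in the paper's notation). -/
@[ext]
structure ES2 (p m : ℕ) : Type where
  u1 : ZMod (p ^ 2)
  u : Fin m → ZMod p
  w1 : ZMod p
  w : Fin m → ZMod p

namespace ES2

variable {p m : ℕ}

instance : Mul (ES2 p m) :=
  ⟨fun x y => ⟨x.u1 + y.u1 + emb p y.w1 * x.u1 + emb p (x.u ⬝ᵥ y.w),
    x.u + y.u, x.w1 + y.w1, x.w + y.w⟩⟩

@[simp] theorem mul_u1 (x y : ES2 p m) :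
    (x * y).u1 = x.u1 + y.u1 + emb p y.w1 * x.u1 + emb p (x.u ⬝ᵥ y.w) := rfl
@[simp] theorem mul_u (x y : ES2 p m) : (x * y).u = x.u + y.u := rfl
@[simp] theorem mul_w1 (x y : ES2 p m) : (x * y).w1 = x.w1 + y.w1 := rfl
@[simp] theorem mul_w (x y : ES2 p m) : (x * y).w = x.w + y.w := rfl

instance : One (ES2 p m) := ⟨⟨0, 0, 0, 0⟩⟩

@[simp] theorem one_u1 : (1 : ES2 p m).u1 = 0 := rfl
@[simp] theorem one_u : (1 : ES2 p m).u = 0 := rfl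
@[simp] theorem one_w1 : (1 : ES2 p m).w1 = 0 := rfl
@[simp] theorem one_w : (1 : ES2 p m).w = 0 := rfl

instance : Inv (ES2 p m) :=
  ⟨fun x => ⟨(1 - emb p x.w1) * (-x.u1 + emb p (x.u ⬝ᵥ x.w)), -x.u, -x.w1, -x.w⟩⟩

@[simp] theorem inv_u1 (x : ES2 p m) :
    (x⁻¹).u1 = (1 - emb p x.w1) * (-x.u1 + emb p (x.u ⬝ᵥ x.w)) := rfl
@[simp] theorem inv_u (x : ES2 p m) : (x⁻¹).u = -x.u := rfl
@[simp] theorem inv_w1 (x : ES2 p m) : (x⁻¹).w1 = -x.w1 := rfl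
@[simp] theorem inv_w (x : ES2 p m) : (x⁻¹).w = -x.w := rfl

instance [NeZero p] : Group (ES2 p m) :=
  Group.ofLeftAxioms
    (fun a b c => by
      ext
      · simp only [mul_u1, mul_u, mul_w1, mul_w, add_dotProduct, dotProduct_add, emb_add]
        linear_combination a.u1 * emb_mul_emb c.w1 b.w1 +
          emb_mul_emb c.w1 (a.u ⬝ᵥ b.w)
      · simp [add_assoc]
      · simp [add_assoc]
      · simp [add_assoc])
    (fun a => by
      ext <;> simp [emb_zero])
    (fun a => by
      ext
      · simp only [mul_u1, inv_u1, inv_u, inv_w1, inv_w, one_u1, neg_dotProduct, emb_neg]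
        linear_combination (a.u1 - emb p (a.u ⬝ᵥ a.w)) * emb_mul_emb a.w1 a.w1
      · simp
      · simp
      · simp)

/-- Central elements of `ES2 p m`. -/
def cen (c : ZMod (p ^ 2)) : ES2 p m := ⟨c, 0, 0, 0⟩

@[simp] theorem cen_u1 (c : ZMod (p ^ 2)) : (cen c : ES2 p m).u1 = c := rfl
@[simp] theorem cen_u (c : ZMod (p ^ 2)) : (cen c : ES2 p m).u = 0 := rfl
@[simp] theorem cen_w1 (c : ZMod (p ^ 2)) : (cen c : ES2 p m).w1 = 0 := rfl
@[simp] theorem cen_w (c : ZMod (p ^ 2)) : (cen c : ES2 p m).w = 0 := rfl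

theorem emb_nsmul {p : ℕ} [NeZero p] (n : ℕ) (a : ZMod p) :
    emb p (n • a) = n • emb p a := by
  induction n with
  | zero => simp [emb_zero]
  | succ k ih => rw [succ_nsmul, succ_nsmul, emb_add, ih]

variable [NeZero p]

theorem mul_cen (h : ES2 p m) (c : ZMod (p ^ 2)) :
    h * cen c = ⟨h.u1 + c, h.u, h.w1, h.w⟩ := by
  ext <;> simp [emb_zero]

theorem cen_pow (c : ZMod (p ^ 2)) (k : ℕ) :
    (cen c : ES2 p m) ^ k = cen (k • c) := by
  induction k with
  | zero => ext <;> simp [cen]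
  | succ j ih =>
      rw [pow_succ, ih, mul_cen, succ_nsmul]
      ext <;> simp [cen]

theorem pow_formula (h : ES2 p m) (n : ℕ) :
    h ^ n = ⟨n • h.u1 + (n.choose 2) • (emb p h.w1 * h.u1 + emb p (h.u ⬝ᵥ h.w)),
      n • h.u, n • h.w1, n • h.w⟩ := by
  induction n with
  | zero => ext <;> simp
  | succ k ih =>
      rw [pow_succ, ih]
      have hcho : (k + 1).choose 2 = k + k.choose 2 := by
        rw [show (2 : ℕ) = 1 + 1 from rfl, Nat.choose_succ_succ, Nat.choose_one_right]
      ext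
      · have h3 : (k • h.u) ⬝ᵥ h.w = k • (h.u ⬝ᵥ h.w) := by
          simp [dotProduct, Finset.smul_sum, smul_mul_assoc, mul_assoc]
        simp only [mul_u1, h3, emb_nsmul, hcho, add_nsmul, smul_add]
        simp only [nsmul_eq_mul, mul_add, one_mul]
        have h1 : emb p h.w1 * ((k.choose 2 : ZMod (p^2)) * (emb p h.w1 * h.u1)) = 0 := by
          rw [show emb p h.w1 * ((k.choose 2 : ZMod (p^2)) * (emb p h.w1 * h.u1))
              = (k.choose 2 : ZMod (p^2)) * ((emb p h.w1 * emb p h.w1) * h.u1) by ring,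
            emb_mul_emb]; ring
        have h2 : emb p h.w1 * ((k.choose 2 : ZMod (p^2)) * emb p (h.u ⬝ᵥ h.w)) = 0 := by
          rw [show emb p h.w1 * ((k.choose 2 : ZMod (p^2)) * emb p (h.u ⬝ᵥ h.w))
              = (k.choose 2 : ZMod (p^2)) * (emb p h.w1 * emb p (h.u ⬝ᵥ h.w)) by ring,
            emb_mul_emb]; ring
        push_cast
        linear_combination h1 + h2
      · simp [succ_nsmul, add_mul, add_comm]
      · simp [succ_nsmul, add_mul, add_comm]
      · simp [succ_nsmul, add_mul, add_comm]

theorem nsmul_p_zero (a : ZMod p) : p • a = 0 := by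
  rw [nsmul_eq_mul, ZMod.natCast_self, zero_mul]

theorem pow_p (hodd : Odd p) (h : ES2 p m) : h ^ p = cen (p • h.u1) := by
  obtain ⟨q, hq⟩ : ∃ q, p.choose 2 = p * q := by
    obtain ⟨r, hr⟩ := hodd
    refine ⟨r, ?_⟩
    rw [Nat.choose_two_right, hr]
    rw [show 2 * r + 1 - 1 = 2 * r from rfl]
    rw [show (2 * r + 1) * (2 * r) = (2 * r + 1) * r * 2 by ring,
      Nat.mul_div_cancel _ (by norm_num)]
  have hpemb : ∀ s : ZMod p, (p : ZMod (p^2)) * emb p s = 0 := fun s => by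
    unfold emb
    rw [show (p : ZMod (p^2)) * ((p : ZMod (p^2)) * (s.val : ZMod (p^2)))
      = ((p : ZMod (p^2)) * (p : ZMod (p^2))) * (s.val : ZMod (p^2)) by ring,
      emb_sq_zero, zero_mul]
  rw [pow_formula]
  ext
  · simp only [cen_u1, hq, nsmul_eq_mul]
    push_cast
    rw [show (p : ZMod (p^2)) * (q : ZMod (p^2)) *
        (emb p h.w1 * h.u1 + emb p (h.u ⬝ᵥ h.w))
      = (q : ZMod (p^2)) * (((p : ZMod (p^2)) * emb p h.w1) * h.u1
          + (p : ZMod (p^2)) * emb p (h.u ⬝ᵥ h.w)) by ring, hpemb, hpemb]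
    try ring
  · simp [nsmul_p_zero]
  · simp [nsmul_p_zero]
  · simp [nsmul_p_zero]

theorem conj_eq (hodd : Odd p) (b : ZMod p) (h : ES2 p m) :
    (⟨0, 0, b, 0⟩ : ES2 p m)⁻¹ * h * ⟨0, 0, b, 0⟩ = h * (h ^ p) ^ b.val := by
  have hv : b.val • (p • h.u1) = emb p b * h.u1 := by
    unfold emb
    rw [smul_smul, nsmul_eq_mul]
    push_cast
    ring
  rw [pow_p hodd, cen_pow, mul_cen, hv]
  ext
  · simp only [mul_u1, inv_u1, inv_u, inv_w1, inv_w]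
    simp only [neg_zero, zero_dotProduct, dotProduct_zero, emb_zero, emb_neg,
      mul_zero, zero_mul, add_zero, zero_add, neg_neg, neg_add_rev]
    try ring
  · simp
  · simp
  · simp

/-- The scaling endomorphism `g ↦ (0,0,l·g.w1,0)`. -/
def scaleHom (l : ZMod p) : ES2 p m →* ES2 p m where
  toFun g := ⟨0, 0, l * g.w1, 0⟩
  map_one' := by ext <;> simp
  map_mul' x y := by ext <;> simp [emb_zero, mul_add]

theorem not_automorphic (hodd : Odd p) {b₁ b₂ : ZMod p}
    (e : ES2 p m ≃* ES2 p m) (he : e ⟨0, 0, b₁, 0⟩ = ⟨0, 0, b₂, 0⟩) : b₁ = b₂ := by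
  set a : ES2 p m := ⟨1, 0, 0, 0⟩ with ha
  have key : a * (a ^ p) ^ b₁.val = a * (a ^ p) ^ b₂.val := by
    have h1 := conj_eq (m := m) hodd b₁ (e.symm a)
    have h2 := conj_eq (m := m) hodd b₂ a
    have h3 := congrArg e h1
    simp only [_root_.map_mul, map_inv, map_pow, he, e.apply_symm_apply] at h3
    rw [← h3, h2]
  have key2 : (a ^ p) ^ b₁.val = (a ^ p) ^ b₂.val := mul_left_cancel key
  have hap : a ^ p = cen ((p : ℕ) • (1 : ZMod (p^2))) := pow_p hodd a
  rw [hap, cen_pow, cen_pow] at key2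
  have hu := congrArg ES2.u1 key2
  simp only [cen_u1, smul_smul, nsmul_eq_mul, mul_one] at hu
  push_cast at hu
  have hcast : ((b₁.val * p : ℕ) : ZMod (p ^ 2)) = ((b₂.val * p : ℕ) : ZMod (p ^ 2)) := by
    push_cast; linear_combination hu
  have hmod := (ZMod.natCast_eq_natCast_iff _ _ _).mp hcast
  have hp0 : 0 < p := Nat.pos_of_ne_zero (NeZero.ne p)
  have hlt1 : b₁.val * p < p ^ 2 := by
    have := b₁.val_lt; nlinarith
  have hlt2 : b₂.val * p < p ^ 2 := by
    have := b₂.val_lt; nlinarith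
  have : b₁.val * p = b₂.val * p := by
    have := hmod
    unfold Nat.ModEq at this
    rwa [Nat.mod_eq_of_lt hlt1, Nat.mod_eq_of_lt hlt2] at this
  have hval : b₁.val = b₂.val :=
    Nat.eq_of_mul_eq_mul_right (Nat.pos_of_ne_zero (NeZero.ne p)) this
  exact ZMod.val_injective p hval

end ES2

theorem ES2_no_partial_order (p m : ℕ) [Fact p.Prime] (hodd : Odd p) :
    (∃ x y : ES2 p m,
      (∃ σ : ES2 p m →* ES2 p m, σ x = y) ∧ (∃ τ : ES2 p m →* ES2 p m, τ y = x) ∧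
      ¬∃ e : ES2 p m ≃* ES2 p m, e x = y) ∧
    (∀ b₁ b₂ : ZMod p, b₁ ≠ 0 → b₂ ≠ 0 → b₁ ≠ b₂ →
      (∃ σ : ES2 p m →* ES2 p m, σ ⟨0, 0, b₁, 0⟩ = (⟨0, 0, b₂, 0⟩ : ES2 p m)) ∧
      (∃ τ : ES2 p m →* ES2 p m, τ ⟨0, 0, b₂, 0⟩ = (⟨0, 0, b₁, 0⟩ : ES2 p m)) ∧
      ¬∃ e : ES2 p m ≃* ES2 p m, e ⟨0, 0, b₁, 0⟩ = (⟨0, 0, b₂, 0⟩ : ES2 p m)) := by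
  have hp : p.Prime := Fact.out
  have main : ∀ b₁ b₂ : ZMod p, b₁ ≠ 0 → b₂ ≠ 0 → b₁ ≠ b₂ →
      (∃ σ : ES2 p m →* ES2 p m, σ ⟨0, 0, b₁, 0⟩ = (⟨0, 0, b₂, 0⟩ : ES2 p m)) ∧
      (∃ τ : ES2 p m →* ES2 p m, τ ⟨0, 0, b₂, 0⟩ = (⟨0, 0, b₁, 0⟩ : ES2 p m)) ∧
      ¬∃ e : ES2 p m ≃* ES2 p m, e ⟨0, 0, b₁, 0⟩ = (⟨0, 0, b₂, 0⟩ : ES2 p m) := by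
    intro b₁ b₂ h1 h2 h12
    refine ⟨⟨ES2.scaleHom (b₂ / b₁), ?_⟩, ⟨ES2.scaleHom (b₁ / b₂), ?_⟩, ?_⟩
    · show (⟨0, 0, b₂ / b₁ * b₁, 0⟩ : ES2 p m) = _
      rw [div_mul_cancel₀ _ h1]
    · show (⟨0, 0, b₁ / b₂ * b₂, 0⟩ : ES2 p m) = _
      rw [div_mul_cancel₀ _ h2]
    · rintro ⟨e, he⟩
      exact h12 (ES2.not_automorphic hodd e he)
  refine ⟨⟨⟨0, 0, 1, 0⟩, ⟨0, 0, 2, 0⟩, ?_⟩, main⟩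
  have h1 : (1 : ZMod p) ≠ 0 := one_ne_zero
  have h2 : (2 : ZMod p) ≠ 0 := by
    have h2' : ((2 : ℕ) : ZMod p) ≠ 0 := by
      rw [Ne, ZMod.natCast_eq_zero_iff]
      intro hdvd
      have hpe := (Nat.prime_dvd_prime_iff_eq hp Nat.prime_two).mp hdvd
      rw [hpe] at hodd
      obtain ⟨r, hr⟩ := hodd
      omega
    simpa using h2'
  have h12 : (1 : ZMod p) ≠ 2 := by
    intro h
    have h0 : (1 : ZMod p) = 0 := by linear_combination -h
    exact one_ne_zero h0
  exact main 1 2 h1 h2 h12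
end

section
/- Let V₁ = span{e₂,…,eₙ,f₁,…,fₙ} ⊂ 𝔽_p^{2n}, a coordinate hyperplane, and let β_k(p,n) be the number of k-dimensional isotropic subspaces of 𝔽_p^{2n} contained in V₁. Then β₀(p,n) = 1, β₁(p,n) = (p^{2n-1}−1)/(p−1), and for 2 ≤ k ≤ n, β_k(p,n) = (p^k(p^{n-k}+1)·C(n−1,k)_p + C(n−1,k−1)_p) · ∏_{i=1}^{k-1}(p^{n-i}+1), where C(m,k)_p is the Gaussian (p-binomial) coefficient; in particular each β_k(p,n) is a polynomial in p with non-negative integer coefficients. -/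
open Matrix

/-- The Gaussian (`q`-)binomial coefficient, via the `q`-Pascal recurrence
`C(n+1,k+1)_q = C(n,k)_q + q^(k+1) C(n,k+1)_q`. -/
def gaussBinom (q : ℕ) : ℕ → ℕ → ℕ
  | _, 0 => 1
  | 0, _ + 1 => 0
  | n + 1, k + 1 => gaussBinom q n k + q ^ (k + 1) * gaussBinom q n (k + 1)

/-!
Put `e = f₁`. Since `⟨⟨v, f₁⟩⟩ = v(e₁)`, the hyperplane `V₁` is `e^⊥`, so an isotropic `W` lies
in `V₁` exactly when `W + ⟨e⟩` is isotropic. Count the linearly independent `k`-tuples `t` with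
`span t + ⟨e⟩` isotropic, split by whether `e ∈ span t`: each count is the matching number of
subspaces times `|GL_k(𝔽_q)| = ∏_{i<k} (q^k - q^i)`. A tuple extends by any
`v ∈ (span t + ⟨e⟩)^⊥ \ span t`, and by the exchange lemma how many of these put `e` into the new
span depends only on whether `e ∈ span t`. For the two tuple counts `A_k` (`e ∈ span t`) and `B_k`
this gives `A_{k+1} = A_k (q^{2n-k} - q^k) + B_k (q^{k+1} - q^k)` and
`B_{k+1} = B_k (q^{2n-k-1} - q^{k+1})`, hence `A_{k+1} = B_k (q^{k+1} - 1)` and `B_k` is an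
explicit product. Dividing by `|GL_k|`, using
`[m choose k]_q · ∏_{i<k} (q^k - q^i) = ∏_{i<k} (q^m - q^i)`, gives the formula.
-/

section GaussianBinomial

open Finset

theorem gaussBinom_zero_right (q m : ℕ) : gaussBinom q m 0 = 1 := by cases m <;> rfl

theorem gaussBinom_one_right (q m : ℕ) : gaussBinom q m 1 = ∑ i ∈ range m, q ^ i := by
  induction m with
  | zero => rfl
  | succ m ih =>
    rw [gaussBinom, gaussBinom_zero_right, ih, sum_range_succ', pow_zero, add_comm, pow_one,
      mul_sum]
    simp only [pow_succ']

theorem prod_range_succ_pow_sub_pow {R : Type*} [CommRing R] (q : R) (a k : ℕ) :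
    ∏ i ∈ range (k + 1), (q ^ (a + 1) - q ^ i) =
      (q ^ (a + 1) - 1) * q ^ k * ∏ i ∈ range k, (q ^ a - q ^ i) := by
  rw [prod_range_succ', pow_zero, mul_comm, mul_assoc,
    prod_congr rfl fun i _ => show q ^ (a + 1) - q ^ (i + 1) = q * (q ^ a - q ^ i) by ring,
    prod_mul_distrib, prod_const, card_range]

theorem gaussBinom_mul_prod_pow_sub_pow (q m k : ℕ) :
    (gaussBinom q m k : ℤ) * ∏ i ∈ range k, ((q : ℤ) ^ k - q ^ i) =
      ∏ i ∈ range k, ((q : ℤ) ^ m - q ^ i) := by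
  induction m generalizing k with
  | zero =>
    cases k with
    | zero => simp [gaussBinom_zero_right]
    | succ k => simp [gaussBinom, prod_range_succ']
  | succ m ih =>
    cases k with
    | zero => simp [gaussBinom_zero_right]
    | succ k =>
      have h := ih (k + 1)
      rw [prod_range_succ_pow_sub_pow, prod_range_succ, ← ih k] at h
      rw [gaussBinom, prod_range_succ_pow_sub_pow, prod_range_succ_pow_sub_pow, ← ih k]
      push_cast
      linear_combination (q : ℤ) ^ (k + 1) * h

theorem pow_mul_prod_Icc_mul_prod_pow_sub_pow (q : ℤ) {n k : ℕ} (hk : k ≤ n) :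
    q ^ k * (∏ i ∈ Icc 1 k, (q ^ (n - i) + 1)) * ∏ i ∈ range k, (q ^ (n - 1) - q ^ i) =
      ∏ i ∈ range k, (q ^ (2 * n - (i + 1)) - q ^ (i + 1)) := by
  induction k with
  | zero => simp
  | succ k ih =>
    obtain ⟨m, rfl⟩ : ∃ m, n = k + 1 + m := ⟨n - (k + 1), by omega⟩
    rw [prod_Icc_succ_top (by omega), prod_range_succ, prod_range_succ, ← ih (by omega),
      show k + 1 + m - (k + 1) = m by omega, show k + 1 + m - 1 = k + m by omega,
      show 2 * (k + 1 + m) - (k + 1) = k + 2 * m + 1 by omega]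
    ring

theorem mul_pow_add_one_mul_gaussBinom_one_add_one (q m : ℕ) :
    q * (q ^ m + 1) * gaussBinom q m 1 + 1 = ∑ i ∈ range (2 * m + 1), q ^ i := by
  rw [gaussBinom_one_right, sum_range_succ', two_mul, sum_range_add]
  simp only [pow_succ', pow_add, ← mul_sum]
  ring

noncomputable def gaussBinomPoly : ℕ → ℕ → Polynomial ℕ
  | _, 0 => 1
  | 0, _ + 1 => 0
  | n + 1, k + 1 => gaussBinomPoly n k + Polynomial.X ^ (k + 1) * gaussBinomPoly n (k + 1)

theorem eval_gaussBinomPoly (q m k : ℕ) : (gaussBinomPoly m k).eval q = gaussBinom q m k := by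
  induction m generalizing k with
  | zero => cases k <;> simp [gaussBinomPoly, gaussBinom]
  | succ m ih => cases k <;> simp [gaussBinomPoly, gaussBinom, ih]

theorem prod_fin_pow_sub_pow_succ (q k : ℕ) :
    ∏ i : Fin (k + 1), (q ^ (k + 1) - q ^ (i : ℕ)) =
      (q ^ (k + 1) - 1) * q ^ k * ∏ i : Fin k, (q ^ k - q ^ (i : ℕ)) := by
  rw [Fin.prod_univ_succ, Fin.val_zero, pow_zero, mul_assoc,
    prod_congr rfl fun (i : Fin k) _ =>
      show q ^ (k + 1) - q ^ (i.succ : ℕ) = q * (q ^ k - q ^ (i : ℕ)) by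
        rw [Fin.val_succ, Nat.mul_sub, ← pow_succ', ← pow_succ'],
    prod_mul_distrib, prod_const, card_univ, Fintype.card_fin]

theorem prod_fin_pow_sub_pow_pos {q : ℕ} (hq : 1 < q) (k : ℕ) :
    0 < ∏ i : Fin k, (q ^ k - q ^ (i : ℕ)) :=
  prod_pos fun i _ => Nat.sub_pos_of_lt (Nat.pow_lt_pow_right hq i.2)

theorem Nat.cast_prod_pow_sub_pow {ι : Type*} {s : Finset ι} {q : ℕ} (hq : 1 ≤ q) {f g : ι → ℕ}
    (h : ∀ i ∈ s, g i ≤ f i) :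
    ((∏ i ∈ s, (q ^ f i - q ^ g i) : ℕ) : ℤ) = ∏ i ∈ s, ((q : ℤ) ^ f i - (q : ℤ) ^ g i) := by
  push_cast [Nat.cast_prod]
  exact prod_congr rfl fun i hi => by
    rw [Nat.cast_sub (Nat.pow_le_pow_right hq (h i hi))]
    push_cast
    rfl

end GaussianBinomial

section Counting

theorem natCard_subtype_eq_add {α : Type*} [Finite α] (P R : α → Prop) :
    Nat.card {x // P x} = Nat.card {x // P x ∧ R x} + Nat.card {x // P x ∧ ¬R x} := by
  classical
  rw [← Nat.card_sum]
  exact Nat.card_congr <| (Equiv.sumCompl fun x : {x // P x} => R x).symm.trans <|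
    Equiv.sumCongr (Equiv.subtypeSubtypeEquivSubtypeInter P R)
      (Equiv.subtypeSubtypeEquivSubtypeInter P (¬R ·))

theorem natCard_subtype_fin_succ_eq_sum {α : Type*} [Fintype α] {k : ℕ}
    (P : (Fin (k + 1) → α) → Prop) :
    Nat.card {t // P t} = ∑ t : Fin k → α, Nat.card {a // P (Fin.snoc t a)} := by
  rw [← Nat.card_sigma]
  exact Nat.card_congr <|
    (Equiv.subtypeEquiv ((Fin.snocEquiv fun _ => α).symm.trans (Equiv.prodComm _ _))
      (by simp [Fin.snocEquiv])).trans
    (Equiv.subtypeProdEquivSigmaSubtype fun t a => P (Fin.snoc t a))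

theorem sum_ite_eq_natCard_mul_add {α : Type*} [Fintype α] {Q : α → Prop} [DecidablePred Q]
    (R : α → Prop) [DecidablePred R] {f : α → ℕ} {a b : ℕ}
    (hf : ∀ x, Q x → f x = if R x then a else b) :
    ∑ x, (if Q x then f x else 0) =
      Nat.card {x // Q x ∧ R x} * a + Nat.card {x // Q x ∧ ¬R x} * b := by
  simp only [Nat.card_eq_fintype_card, Fintype.card_subtype, Finset.card_filter, Finset.sum_mul,
    ← Finset.sum_add_distrib]
  refine Finset.sum_congr rfl fun x _ => ?_
  by_cases hQ : Q x
  · by_cases hR : R x <;> simp [hQ, hR, hf x hQ]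
  · simp [hQ]

end Counting

open Module Submodule Set

namespace Submodule

theorem span_range_snoc {R M : Type*} [Semiring R] [AddCommMonoid M] [Module R M] {k : ℕ}
    (t : Fin k → M) (v : M) :
    span R (range (Fin.snoc t v : Fin (k + 1) → M)) = span R (range t) ⊔ R ∙ v := by
  rw [Fin.range_snoc, span_insert, sup_comm]

variable {K V : Type*} [DivisionRing K] [AddCommGroup V] [Module K V]

theorem mem_sup_span_singleton_comm {W : Submodule K V} {x y : V} (hx : x ∉ W) (hy : y ∉ W) :
    x ∈ W ⊔ K ∙ y ↔ y ∈ W ⊔ K ∙ x := by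
  have exchange {x y : V} (hx : x ∉ W) (h : x ∈ W ⊔ K ∙ y) : y ∈ W ⊔ K ∙ x := by
    rw [sup_comm, ← span_eq W, ← span_insert] at h ⊢
    exact mem_span_insert_exchange h (by rwa [span_eq])
  exact ⟨exchange hx, exchange hy⟩

theorem natCard_mem_and_notMem [Fintype K] [Finite V] {U W : Submodule K V} (h : W ≤ U) :
    Nat.card {v // v ∈ U ∧ v ∉ W} =
      Fintype.card K ^ finrank K U - Fintype.card K ^ finrank K W := by
  rw [Fintype.card_eq_nat_card, ← Module.natCard_eq_pow_finrank, ← Module.natCard_eq_pow_finrank]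
  exact Set.ncard_sdiff (s := (W : Set V)) (t := U) h

end Submodule

section LinearIndependentTuples

variable {K V : Type*} [DivisionRing K] [Fintype K] [AddCommGroup V] [Module K V] [Finite V]

local notation "q" => Fintype.card K

theorem natCard_linearIndependent_span_eq {k : ℕ} {W : Submodule K V} (hW : finrank K W = k) :
    Nat.card {t : Fin k → V // LinearIndependent K t ∧ span K (range t) = W} =
      ∏ i : Fin k, (q ^ k - q ^ (i : ℕ)) := by
  rw [← hW, ← card_linearIndependent le_rfl, hW]
  symm
  refine Nat.card_congr
    { toFun s := ⟨W.subtype ∘ s, s.2.map' _ W.ker_subtype, ?_⟩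
      invFun t := ⟨fun i => ⟨t.1 i, t.2.2.le (subset_span (mem_range_self i))⟩,
        LinearIndependent.of_comp W.subtype t.2.1⟩
      left_inv _ := rfl
      right_inv _ := rfl }
  rw [range_comp, ← map_span, s.2.span_eq_top_of_card_eq_finrank' (by simp [hW]),
    map_subtype_top]

theorem natCard_linearIndependent_span (P : Submodule K V → Prop) (k : ℕ) :
    Nat.card {t : Fin k → V // LinearIndependent K t ∧ P (span K (range t))} =
      Nat.card {W : Submodule K V // finrank K W = k ∧ P W} *
        ∏ i : Fin k, (q ^ k - q ^ (i : ℕ)) := by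
  let spanOf (t : {t : Fin k → V // LinearIndependent K t ∧ P (span K (range t))}) :
      {W : Submodule K V // finrank K W = k ∧ P W} :=
    ⟨span K (range t.1), by rw [finrank_span_eq_card t.2.1, Fintype.card_fin], t.2.2⟩
  have : Fintype {W : Submodule K V // finrank K W = k ∧ P W} := Fintype.ofFinite _
  rw [← Nat.card_congr (Equiv.sigmaFiberEquiv spanOf), Nat.card_sigma, Nat.card_eq_fintype_card,
    ← Finset.card_univ]
  refine Finset.sum_const_nat fun W _ => ?_
  rw [← natCard_linearIndependent_span_eq W.2.1]
  exact Nat.card_congr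
    { toFun t := ⟨t.1.1, t.1.2.1, congrArg Subtype.val t.2⟩
      invFun t := ⟨⟨t.1, t.2.1, by rw [t.2.2]; exact W.2.2⟩, Subtype.ext t.2.2⟩
      left_inv _ := rfl
      right_inv _ := rfl }

end LinearIndependentTuples

namespace LinearMap.BilinForm

def IsTotallyIsotropic {R M : Type*} [CommSemiring R] [AddCommMonoid M] [Module R M]
    (B : LinearMap.BilinForm R M) (W : Submodule R M) : Prop :=
  W ≤ B.orthogonal W

variable {R M : Type*} [CommRing R] [AddCommGroup M] [Module R M] {B : LinearMap.BilinForm R M}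

theorem isTotallyIsotropic_sup_span_singleton (hB : B.IsAlt) {W : Submodule R M} {v : M} :
    B.IsTotallyIsotropic (W ⊔ R ∙ v) ↔ B.IsTotallyIsotropic W ∧ v ∈ B.orthogonal W := by
  constructor
  · intro h
    have h' : B.orthogonal (W ⊔ R ∙ v) ≤ B.orthogonal W := orthogonal_le le_sup_left
    exact ⟨le_sup_left.trans (h.trans h'), h' (h (mem_sup_right (mem_span_singleton_self v)))⟩
  · rintro ⟨hW, hv⟩ x hx y hy
    obtain ⟨w, hw, _, hc, rfl⟩ := mem_sup.1 hx
    obtain ⟨w', hw', _, hc', rfl⟩ := mem_sup.1 hy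
    obtain ⟨c, rfl⟩ := mem_span_singleton.1 hc
    obtain ⟨c', rfl⟩ := mem_span_singleton.1 hc'
    have hvw : B v w = 0 := hB.isRefl _ _ (hv w hw)
    simp [hW hw w' hw', hv w' hw', hvw, hB.self_eq_zero]

end LinearMap.BilinForm

section IsotropicFrames

open LinearMap.BilinForm

variable {K V : Type*} [Field K] [AddCommGroup V] [Module K V] {B : LinearMap.BilinForm K V} {e : V}

variable (B e) in
noncomputable def isotropicFrameCount (k : ℕ) (P : Submodule K V → Prop) : ℕ :=
  Nat.card {t : Fin k → V // LinearIndependent K t ∧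
    B.IsTotallyIsotropic (span K (range t) ⊔ K ∙ e) ∧ P (span K (range t))}

variable (B e) in
noncomputable def isotropicSubspaceCount (k : ℕ) (P : Submodule K V → Prop) : ℕ :=
  Nat.card {W : Submodule K V // finrank K W = k ∧ B.IsTotallyIsotropic (W ⊔ K ∙ e) ∧ P W}

theorem isotropicFrame_snoc_iff (hAlt : B.IsAlt) (P : Submodule K V → Prop) {k : ℕ}
    {t : Fin k → V} {v : V} :
    (LinearIndependent K (Fin.snoc t v : Fin (k + 1) → V) ∧
        B.IsTotallyIsotropic (span K (range (Fin.snoc t v : Fin (k + 1) → V)) ⊔ K ∙ e) ∧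
        P (span K (range (Fin.snoc t v : Fin (k + 1) → V)))) ↔
      (LinearIndependent K t ∧ B.IsTotallyIsotropic (span K (range t) ⊔ K ∙ e)) ∧
        v ∈ B.orthogonal (span K (range t) ⊔ K ∙ e) ∧ v ∉ span K (range t) ∧
        P (span K (range t) ⊔ K ∙ v) := by
  rw [linearIndependent_finSnoc, span_range_snoc, sup_right_comm,
    isTotallyIsotropic_sup_span_singleton hAlt]
  tauto

theorem isotropicFrameCount_zero_mem (he : e ≠ 0) : isotropicFrameCount B e 0 (e ∈ ·) = 0 :=
  Nat.card_eq_zero.2 <| .inl ⟨fun t => he (by simpa using t.2.2.2)⟩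

theorem isotropicFrameCount_zero_notMem (hAlt : B.IsAlt) (he : e ≠ 0) :
    isotropicFrameCount B e 0 (e ∉ ·) = 1 := by
  have hIso : B.IsTotallyIsotropic (⊥ ⊔ K ∙ e) :=
    (isTotallyIsotropic_sup_span_singleton hAlt).2 ⟨bot_le, by simp⟩
  rw [isotropicFrameCount, Nat.card_congr (Equiv.subtypeUnivEquiv fun t => ?_), Nat.card_unique]
  rw [range_eq_empty, span_empty]
  exact ⟨linearIndependent_empty_type, hIso, by simpa using he⟩

variable [Fintype V]

open scoped Classical in
theorem isotropicFrameCount_succ_eq (hAlt : B.IsAlt) (P : Submodule K V → Prop) {k a b : ℕ}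
    (hfiber : ∀ t : Fin k → V, LinearIndependent K t →
      B.IsTotallyIsotropic (span K (range t) ⊔ K ∙ e) →
      Nat.card {v // v ∈ B.orthogonal (span K (range t) ⊔ K ∙ e) ∧ v ∉ span K (range t) ∧
        P (span K (range t) ⊔ K ∙ v)} = if e ∈ span K (range t) then a else b) :
    isotropicFrameCount B e (k + 1) P =
      isotropicFrameCount B e k (e ∈ ·) * a + isotropicFrameCount B e k (e ∉ ·) * b := by
  rw [isotropicFrameCount, natCard_subtype_fin_succ_eq_sum]
  refine (Finset.sum_congr rfl fun t _ => ?_).trans <|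
    (sum_ite_eq_natCard_mul_add (Q := fun t : Fin k → V => LinearIndependent K t ∧
      B.IsTotallyIsotropic (span K (range t) ⊔ K ∙ e)) (fun t => e ∈ span K (range t))
      fun t ht => hfiber t ht.1 ht.2).trans (by simp only [isotropicFrameCount, and_assoc])
  rw [Nat.card_congr (Equiv.subtypeEquivRight fun v => isotropicFrame_snoc_iff hAlt P)]
  split_ifs with ht
  · simp only [ht, true_and]
  · simp only [ht, false_and, Nat.card_of_isEmpty]

theorem natCard_isotropic_eq_add (k : ℕ) :
    Nat.card {W : Submodule K V // finrank K W = k ∧ B.IsTotallyIsotropic (W ⊔ K ∙ e)} =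
      isotropicSubspaceCount B e k (e ∈ ·) + isotropicSubspaceCount B e k (e ∉ ·) := by
  rw [natCard_subtype_eq_add _ (e ∈ ·)]
  simp only [isotropicSubspaceCount, and_assoc]

variable [Fintype K]

local notation "q" => Fintype.card K

theorem isotropicFrameCount_eq (k : ℕ) (P : Submodule K V → Prop) :
    isotropicFrameCount B e k P =
      isotropicSubspaceCount B e k P * ∏ i : Fin k, (q ^ k - q ^ (i : ℕ)) :=
  natCard_linearIndependent_span (fun W => B.IsTotallyIsotropic (W ⊔ K ∙ e) ∧ P W) k

open scoped Classical in
theorem natCard_isotropicExtension_mem (hB : B.Nondegenerate) {W : Submodule K V}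
    (hW : B.IsTotallyIsotropic (W ⊔ K ∙ e)) :
    Nat.card {v // v ∈ B.orthogonal (W ⊔ K ∙ e) ∧ v ∉ W ∧ e ∈ W ⊔ K ∙ v} =
      if e ∈ W then q ^ (finrank K V - finrank K W) - q ^ finrank K W
      else q ^ (finrank K W + 1) - q ^ finrank K W := by
  split_ifs with he
  · rw [sup_eq_left.2 ((span_singleton_le_iff_mem e W).2 he)] at hW ⊢
    rw [← finrank_orthogonal hB, ← natCard_mem_and_notMem hW]
    exact Nat.card_congr <| Equiv.subtypeEquivRight fun v => by
      simp only [mem_sup_left he, and_true]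
  · rw [← finrank_sup_span_singleton he, ← natCard_mem_and_notMem le_sup_left]
    exact Nat.card_congr <| Equiv.subtypeEquivRight fun v => by
      constructor
      · rintro ⟨-, hvW, hev⟩
        exact ⟨(mem_sup_span_singleton_comm he hvW).1 hev, hvW⟩
      · rintro ⟨hv, hvW⟩
        exact ⟨hW hv, hvW, (mem_sup_span_singleton_comm he hvW).2 hv⟩

open scoped Classical in
theorem natCard_isotropicExtension_notMem (hB : B.Nondegenerate) {W : Submodule K V}
    (hW : B.IsTotallyIsotropic (W ⊔ K ∙ e)) :
    Nat.card {v // v ∈ B.orthogonal (W ⊔ K ∙ e) ∧ v ∉ W ∧ e ∉ W ⊔ K ∙ v} =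
      if e ∈ W then 0
      else q ^ (finrank K V - (finrank K W + 1)) - q ^ (finrank K W + 1) := by
  split_ifs with he
  · exact Nat.card_eq_zero.2 <| .inl ⟨fun v => v.2.2.2 (mem_sup_left he)⟩
  · rw [← finrank_sup_span_singleton he, ← finrank_orthogonal hB, ← natCard_mem_and_notMem hW]
    exact Nat.card_congr <| Equiv.subtypeEquivRight fun v => by
      constructor
      · rintro ⟨hv, hvW, hev⟩
        exact ⟨hv, fun hv' => hev ((mem_sup_span_singleton_comm he hvW).2 hv')⟩
      · rintro ⟨hv, hv'⟩
        have hvW : v ∉ W := fun h => hv' (mem_sup_left h)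
        exact ⟨hv, hvW, fun hev => hv' ((mem_sup_span_singleton_comm he hvW).1 hev)⟩

theorem isotropicFrameCount_succ_mem (hAlt : B.IsAlt) (hB : B.Nondegenerate) (k : ℕ) :
    isotropicFrameCount B e (k + 1) (e ∈ ·) =
      isotropicFrameCount B e k (e ∈ ·) * (q ^ (finrank K V - k) - q ^ k) +
        isotropicFrameCount B e k (e ∉ ·) * (q ^ (k + 1) - q ^ k) :=
  isotropicFrameCount_succ_eq hAlt _ fun t ht hIso => by
    rw [natCard_isotropicExtension_mem hB hIso, finrank_span_eq_card ht, Fintype.card_fin]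

theorem isotropicFrameCount_succ_notMem (hAlt : B.IsAlt) (hB : B.Nondegenerate) (k : ℕ) :
    isotropicFrameCount B e (k + 1) (e ∉ ·) =
      isotropicFrameCount B e k (e ∉ ·) * (q ^ (finrank K V - (k + 1)) - q ^ (k + 1)) := by
  rw [isotropicFrameCount_succ_eq hAlt _ (a := 0) fun t ht hIso => ?_, mul_zero, zero_add]
  rw [natCard_isotropicExtension_notMem hB hIso, finrank_span_eq_card ht, Fintype.card_fin]

theorem isotropicFrameCount_notMem_eq_prod (hAlt : B.IsAlt) (hB : B.Nondegenerate) (he : e ≠ 0)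
    (k : ℕ) : isotropicFrameCount B e k (e ∉ ·) =
      ∏ i ∈ Finset.range k, (q ^ (finrank K V - (i + 1)) - q ^ (i + 1)) := by
  induction k with
  | zero => exact isotropicFrameCount_zero_notMem hAlt he
  | succ k ih => rw [isotropicFrameCount_succ_notMem hAlt hB, ih, Finset.prod_range_succ]

theorem isotropicFrameCount_succ_mem_eq (hAlt : B.IsAlt) (hB : B.Nondegenerate) (he : e ≠ 0)
    (k : ℕ) : isotropicFrameCount B e (k + 1) (e ∈ ·) =
      isotropicFrameCount B e k (e ∉ ·) * (q ^ (k + 1) - 1) := by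
  have hq : 1 ≤ q := Fintype.card_pos
  induction k with
  | zero => simp [isotropicFrameCount_succ_mem hAlt hB, isotropicFrameCount_zero_mem he]
  | succ k ih =>
    rw [isotropicFrameCount_succ_mem hAlt hB, ih, isotropicFrameCount_succ_notMem hAlt hB,
      mul_right_comm, ← mul_add, add_comm (q ^ (k + 1) - 1),
      Nat.sub_add_sub_cancel (Nat.pow_le_pow_right hq (by omega)) (Nat.one_le_pow _ _ hq)]

theorem natCard_isotropic_zero (hAlt : B.IsAlt) (he : e ≠ 0) :
    Nat.card {W : Submodule K V // finrank K W = 0 ∧ B.IsTotallyIsotropic (W ⊔ K ∙ e)} = 1 := by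
  have hmem := isotropicFrameCount_eq (B := B) (e := e) 0 (e ∈ ·)
  have hnotMem := isotropicFrameCount_eq (B := B) (e := e) 0 (e ∉ ·)
  simp only [Finset.univ_eq_empty, Finset.prod_empty, mul_one] at hmem hnotMem
  rw [natCard_isotropic_eq_add, ← hmem, ← hnotMem, isotropicFrameCount_zero_mem he,
    isotropicFrameCount_zero_notMem hAlt he]

theorem isotropicSubspaceCount_succ_mem_mul_pow (hAlt : B.IsAlt) (hB : B.Nondegenerate)
    (he : e ≠ 0) (k : ℕ) :
    isotropicSubspaceCount B e (k + 1) (e ∈ ·) * q ^ k = isotropicSubspaceCount B e k (e ∉ ·) := by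
  have hq : 1 < q := Fintype.one_lt_card
  have h := isotropicFrameCount_succ_mem_eq hAlt hB he k
  rw [isotropicFrameCount_eq, isotropicFrameCount_eq, prod_fin_pow_sub_pow_succ] at h
  refine Nat.eq_of_mul_eq_mul_right (Nat.mul_pos (Nat.sub_pos_of_lt
    (Nat.one_lt_pow k.succ_ne_zero hq)) (prod_fin_pow_sub_pow_pos hq k)) ?_
  calc _ = isotropicSubspaceCount B e (k + 1) (e ∈ ·) *
        ((q ^ (k + 1) - 1) * q ^ k * ∏ i : Fin k, (q ^ k - q ^ (i : ℕ))) := by ring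
    _ = _ := h
    _ = _ := by ring

theorem isotropicSubspaceCount_notMem_eq (hAlt : B.IsAlt) (hB : B.Nondegenerate) (he : e ≠ 0)
    {n k : ℕ} (hd : finrank K V = 2 * n) (hk : k ≤ n) :
    isotropicSubspaceCount B e k (e ∉ ·) =
      q ^ k * gaussBinom q (n - 1) k * ∏ i ∈ Finset.Icc 1 k, (q ^ (n - i) + 1) := by
  have hq : 1 < q := Fintype.one_lt_card
  refine Nat.eq_of_mul_eq_mul_right (prod_fin_pow_sub_pow_pos hq k) ?_
  rw [← isotropicFrameCount_eq, isotropicFrameCount_notMem_eq_prod hAlt hB he, hd,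
    Fin.prod_univ_eq_prod_range (fun i => q ^ k - q ^ i)]
  apply Nat.cast_injective (R := ℤ)
  rw [Nat.cast_mul, Nat.cast_prod_pow_sub_pow hq.le fun i hi => by simp at hi; omega,
    Nat.cast_prod_pow_sub_pow hq.le fun i hi => (Finset.mem_range.1 hi).le]
  push_cast
  rw [mul_right_comm _ (gaussBinom q (n - 1) k : ℤ), mul_assoc _ (gaussBinom q (n - 1) k : ℤ),
    gaussBinom_mul_prod_pow_sub_pow, pow_mul_prod_Icc_mul_prod_pow_sub_pow _ hk]

theorem isotropicSubspaceCount_succ_mem_eq (hAlt : B.IsAlt) (hB : B.Nondegenerate) (he : e ≠ 0)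
    {n k : ℕ} (hd : finrank K V = 2 * n) (hk : k + 1 ≤ n) :
    isotropicSubspaceCount B e (k + 1) (e ∈ ·) =
      gaussBinom q (n - 1) k * ∏ i ∈ Finset.Icc 1 k, (q ^ (n - i) + 1) := by
  have h := isotropicSubspaceCount_succ_mem_mul_pow hAlt hB he k
  rw [isotropicSubspaceCount_notMem_eq hAlt hB he hd (by omega)] at h
  exact Nat.eq_of_mul_eq_mul_right (pow_pos Fintype.card_pos k) (h.trans (by ring))

theorem natCard_isotropic_succ (hAlt : B.IsAlt) (hB : B.Nondegenerate) (he : e ≠ 0) {n k : ℕ}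
    (hd : finrank K V = 2 * n) (hk : k + 1 ≤ n) :
    Nat.card {W : Submodule K V // finrank K W = k + 1 ∧ B.IsTotallyIsotropic (W ⊔ K ∙ e)} =
      (q ^ (k + 1) * (q ^ (n - (k + 1)) + 1) * gaussBinom q (n - 1) (k + 1) +
        gaussBinom q (n - 1) k) * ∏ i ∈ Finset.Icc 1 k, (q ^ (n - i) + 1) := by
  rw [natCard_isotropic_eq_add, isotropicSubspaceCount_succ_mem_eq hAlt hB he hd hk,
    isotropicSubspaceCount_notMem_eq hAlt hB he hd hk, Finset.prod_Icc_succ_top (by omega)]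
  ring

end IsotropicFrames

section Symplectic

open LinearMap.BilinForm

variable {p n : ℕ}

theorem dotProduct_Delta_mulVec_s17 (v w : Fin n ⊕ Fin n → ZMod p) :
    v ⬝ᵥ (Delta p n *ᵥ w) =
      ∑ i, (v (Sum.inl i) * w (Sum.inr i) - v (Sum.inr i) * w (Sum.inl i)) := by
  simp [Delta, dotProduct, Fintype.sum_sum_type, fromBlocks_mulVec, Finset.sum_sub_distrib,
    neg_mulVec, ← sub_eq_add_neg]

theorem isAlt_toBilin'_Delta : (toBilin' (Delta p n)).IsAlt := fun v => by
  simp [toBilin'_apply', dotProduct_Delta_mulVec_s17, mul_comm]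

theorem nondegenerate_toBilin'_Delta [Fact p.Prime] : (toBilin' (Delta p n)).Nondegenerate := by
  refine nondegenerate_toBilin'_of_det_ne_zero' _ ?_
  rw [show Delta p n = -J (Fin n) (ZMod p) by simp [Delta, J, fromBlocks_neg], det_neg]
  exact mul_ne_zero (by simp) (isUnit_det_J _ _).ne_zero

theorem toBilin'_Delta_single_inr (v : Fin n ⊕ Fin n → ZMod p) (i : Fin n) :
    toBilin' (Delta p n) v (Pi.single (Sum.inr i) 1) = v (Sum.inl i) := by
  rw [toBilin'_apply', dotProduct_Delta_mulVec_s17]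
  simp [Pi.single_apply]

theorem isTotallyIsotropic_sup_single_iff [Fact p.Prime]
    (W : Submodule (ZMod p) (Fin n ⊕ Fin n → ZMod p)) (i : Fin n) :
    (toBilin' (Delta p n)).IsTotallyIsotropic (W ⊔ ZMod p ∙ Pi.single (Sum.inr i) 1) ↔
      (∀ v ∈ W, ∀ w ∈ W, v ⬝ᵥ (Delta p n *ᵥ w) = 0) ∧ ∀ v ∈ W, v (Sum.inl i) = 0 := by
  rw [isTotallyIsotropic_sup_span_singleton
    (isAlt_toBilin'_Delta (p := p) (n := n))]
  simp only [IsTotallyIsotropic, SetLike.le_def,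
    mem_orthogonal_iff, toBilin'_Delta_single_inr]
  simp only [toBilin'_apply']
  exact and_congr ⟨fun h v hv w hw => h hw v hv, fun h w hw v hv => h v hv w hw⟩ Iff.rfl

theorem natCard_isotropic_in_hyperplane_eq [Fact p.Prime] (i : Fin n) (k : ℕ) :
    Nat.card {W : Submodule (ZMod p) (Fin n ⊕ Fin n → ZMod p) //
        (∀ v ∈ W, ∀ w ∈ W, v ⬝ᵥ (Delta p n *ᵥ w) = 0) ∧ (∀ v ∈ W, v (Sum.inl i) = 0) ∧
          finrank (ZMod p) W = k} =
      Nat.card {W : Submodule (ZMod p) (Fin n ⊕ Fin n → ZMod p) // finrank (ZMod p) W = k ∧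
        (toBilin' (Delta p n)).IsTotallyIsotropic (W ⊔ ZMod p ∙ Pi.single (Sum.inr i) 1)} :=
  Nat.card_congr <| Equiv.subtypeEquivRight fun W => by
    rw [isTotallyIsotropic_sup_single_iff]
    tauto

end Symplectic

theorem card_isotropic_subspaces_in_hyperplane_general (p n : ℕ) [Fact p.Prime]
    (hn : 0 < n) :
    (Nat.card {W : Submodule (ZMod p) (Fin n ⊕ Fin n → ZMod p) //
        (∀ v ∈ W, ∀ w ∈ W, v ⬝ᵥ (Delta p n *ᵥ w) = 0) ∧
        (∀ v ∈ W, v (Sum.inl ⟨0, hn⟩) = 0) ∧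
        Module.finrank (ZMod p) W = 0} = 1) ∧
    (Nat.card {W : Submodule (ZMod p) (Fin n ⊕ Fin n → ZMod p) //
        (∀ v ∈ W, ∀ w ∈ W, v ⬝ᵥ (Delta p n *ᵥ w) = 0) ∧
        (∀ v ∈ W, v (Sum.inl ⟨0, hn⟩) = 0) ∧
        Module.finrank (ZMod p) W = 1} = ∑ i ∈ Finset.range (2 * n - 1), p ^ i) ∧
    (∀ k : ℕ, 2 ≤ k → k ≤ n →
      Nat.card {W : Submodule (ZMod p) (Fin n ⊕ Fin n → ZMod p) //
          (∀ v ∈ W, ∀ w ∈ W, v ⬝ᵥ (Delta p n *ᵥ w) = 0) ∧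
          (∀ v ∈ W, v (Sum.inl ⟨0, hn⟩) = 0) ∧
          Module.finrank (ZMod p) W = k}
        = (p ^ k * (p ^ (n - k) + 1) * gaussBinom p (n - 1) k
            + gaussBinom p (n - 1) (k - 1))
          * ∏ i ∈ Finset.Icc 1 (k - 1), (p ^ (n - i) + 1) ∧
      ∃ P : Polynomial ℕ, ∀ q : ℕ,
        P.eval q = (q ^ k * (q ^ (n - k) + 1) * gaussBinom q (n - 1) k
            + gaussBinom q (n - 1) (k - 1))
          * ∏ i ∈ Finset.Icc 1 (k - 1), (q ^ (n - i) + 1)) := by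
  set e : Fin n ⊕ Fin n → ZMod p := Pi.single (Sum.inr ⟨0, hn⟩) 1
  have he : e ≠ 0 := Pi.single_ne_zero_iff.2 one_ne_zero
  have hd : finrank (ZMod p) (Fin n ⊕ Fin n → ZMod p) = 2 * n := by simp [two_mul]
  have hcount := natCard_isotropic_in_hyperplane_eq (p := p) ⟨0, hn⟩
  have hsucc {k : ℕ} (hk : k + 1 ≤ n) := ZMod.card p ▸
    natCard_isotropic_succ isAlt_toBilin'_Delta nondegenerate_toBilin'_Delta he hd hk
  refine ⟨?_, ?_, fun k _ hkn => ⟨?_, ?_⟩⟩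
  · rw [hcount, natCard_isotropic_zero isAlt_toBilin'_Delta he]
  · obtain ⟨m, rfl⟩ : ∃ m, n = m + 1 := ⟨n - 1, by omega⟩
    rw [hcount, hsucc hn, show 2 * (m + 1) - 1 = 2 * m + 1 by omega,
      ← mul_pow_add_one_mul_gaussBinom_one_add_one]
    simp [gaussBinom_zero_right]
  · obtain ⟨j, rfl⟩ : ∃ j, k = j + 1 := ⟨k - 1, by omega⟩
    rw [hcount, hsucc hkn, Nat.add_sub_cancel]
  · open Polynomial in
    exact ⟨(X ^ k * (X ^ (n - k) + 1) * gaussBinomPoly (n - 1) k +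
        gaussBinomPoly (n - 1) (k - 1)) * ∏ i ∈ Finset.Icc 1 (k - 1), (X ^ (n - i) + 1),
      fun q => by simp [eval_prod, eval_gaussBinomPoly]⟩

theorem card_isotropic_subspaces_in_hyperplane (p n : ℕ) [Fact p.Prime] (hodd : Odd p)
    (hn : 0 < n) :
    (Nat.card {W : Submodule (ZMod p) (Fin n ⊕ Fin n → ZMod p) //
        (∀ v ∈ W, ∀ w ∈ W, v ⬝ᵥ (Delta p n *ᵥ w) = 0) ∧
        (∀ v ∈ W, v (Sum.inl ⟨0, hn⟩) = 0) ∧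
        Module.finrank (ZMod p) W = 0} = 1) ∧
    (Nat.card {W : Submodule (ZMod p) (Fin n ⊕ Fin n → ZMod p) //
        (∀ v ∈ W, ∀ w ∈ W, v ⬝ᵥ (Delta p n *ᵥ w) = 0) ∧
        (∀ v ∈ W, v (Sum.inl ⟨0, hn⟩) = 0) ∧
        Module.finrank (ZMod p) W = 1} = ∑ i ∈ Finset.range (2 * n - 1), p ^ i) ∧
    (∀ k : ℕ, 2 ≤ k → k ≤ n →
      Nat.card {W : Submodule (ZMod p) (Fin n ⊕ Fin n → ZMod p) //
          (∀ v ∈ W, ∀ w ∈ W, v ⬝ᵥ (Delta p n *ᵥ w) = 0) ∧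
          (∀ v ∈ W, v (Sum.inl ⟨0, hn⟩) = 0) ∧
          Module.finrank (ZMod p) W = k}
        = (p ^ k * (p ^ (n - k) + 1) * gaussBinom p (n - 1) k
            + gaussBinom p (n - 1) (k - 1))
          * ∏ i ∈ Finset.Icc 1 (k - 1), (p ^ (n - i) + 1) ∧
      ∃ P : Polynomial ℕ, ∀ q : ℕ,
        P.eval q = (q ^ k * (q ^ (n - k) + 1) * gaussBinom q (n - 1) k
            + gaussBinom q (n - 1) (k - 1))
          * ∏ i ∈ Finset.Icc 1 (k - 1), (q ^ (n - i) + 1)) :=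
  card_isotropic_subspaces_in_hyperplane_general p n hn
end
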